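/- arXiv:1603.06636 — 14 statements merged into one kernel-verified Lean document; each statement's English description precedes it below -/
import Mathlib

section
/- Let x ∈ M_n(ℂ) be nilpotent, and suppose there exists a one-dimensional subspace L ⊆ V₁ such that the column space of x^θ is contained in L and L is contained in the kernel of x^θ (as subspaces of ℂ^n). Then the matrix x^{−θ} is nilpotent. -/
open Matrix Polynomial

/-- The block-diagonal part `x^θ` of a matrix on `ℂ^n = ℂ^p × ℂ^q`. -/
def xTheta {p q : ℕ} (x : Matrix (Fin p ⊕ Fin q) (Fin p ⊕ Fin q) ℂ) :
    Matrix (Fin p ⊕ Fin q) (Fin p ⊕ Fin q) ℂ :=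
  Matrix.fromBlocks x.toBlocks₁₁ 0 0 x.toBlocks₂₂

/-- The block-antidiagonal part `x^{-θ}`. -/
def xMTheta {p q : ℕ} (x : Matrix (Fin p ⊕ Fin q) (Fin p ⊕ Fin q) ℂ) :
    Matrix (Fin p ⊕ Fin q) (Fin p ⊕ Fin q) ℂ :=
  Matrix.fromBlocks 0 x.toBlocks₁₂ x.toBlocks₂₁ 0

/-- `V₁ = ℂ^p × {0}` as a subspace of `ℂ^n = ℂ^p × ℂ^q`. -/
noncomputable def V1 (p q : ℕ) : Submodule ℂ ((Fin p ⊕ Fin q) → ℂ) :=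
  LinearMap.ker (LinearMap.funLeft ℂ ℂ (Sum.inr : Fin q → Fin p ⊕ Fin q))

/-- Auxiliary: a nilpotent matrix over `ℂ` has charpoly `X ^ card`. -/
lemma aux_charpoly_of_nilpotent {ι : Type*} [Fintype ι] [DecidableEq ι]
    {M : Matrix (Fin p ⊕ Fin q) (Fin p ⊕ Fin q) ℂ} (hM : IsNilpotent M) :
    M.charpoly = X ^ (Fintype.card (Fin p ⊕ Fin q)) := by
  have h := M.isNilpotent_charpoly_sub_pow_of_isNilpotent hM
  have := h.eq_zero
  exact sub_eq_zero.mp this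

/-- If `x` is nilpotent and there is a line `L ⊆ V₁` with
`Im x^θ ⊆ L ⊆ ker x^θ`, then `x^{-θ}` is nilpotent. -/
theorem stmt0 (p q : ℕ) (hp : 1 ≤ p) (hq : 1 ≤ q)
    (x : Matrix (Fin p ⊕ Fin q) (Fin p ⊕ Fin q) ℂ)
    (hx : IsNilpotent x)
    (L : Submodule ℂ ((Fin p ⊕ Fin q) → ℂ))
    (hL : Module.finrank ℂ L = 1)
    (hLV1 : L ≤ V1 p q)
    (hrange : LinearMap.range (xTheta x).mulVecLin ≤ L)
    (hker : L ≤ LinearMap.ker (xTheta x).mulVecLin) :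
    IsNilpotent (xMTheta x) := by
  classical
  set y := xTheta x with hy
  set z := xMTheta x with hz
  -- x = y + z
  have hxyz : x = y + z := by
    ext (i | i) (j | j) <;>
      simp [hy, hz, xTheta, xMTheta, Matrix.toBlocks₁₁, Matrix.toBlocks₁₂,
        Matrix.toBlocks₂₁, Matrix.toBlocks₂₂]
  -- conjugation by S = diag(1, -1)
  set d : (Fin p ⊕ Fin q) → ℂ := Sum.elim (fun _ => (1 : ℂ)) (fun _ => (-1 : ℂ)) with hd
  set S : Matrix (Fin p ⊕ Fin q) (Fin p ⊕ Fin q) ℂ := Matrix.diagonal d with hSdef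
  have hdd : (fun i => d i * d i) = fun _ : Fin p ⊕ Fin q => (1 : ℂ) := by
    funext i
    rcases i with i | i <;> simp [hd]
  have hS : S * S = 1 := by
    rw [hSdef, Matrix.diagonal_mul_diagonal, hdd, Matrix.diagonal_one]
  have hconj : S * x * S = y - z := by
    ext (i | i) (j | j) <;>
      simp [hSdef, Matrix.diagonal_mul, Matrix.mul_diagonal, hd, hy, hz, xTheta, xMTheta,
        Matrix.toBlocks₁₁, Matrix.toBlocks₁₂, Matrix.toBlocks₂₁, Matrix.toBlocks₂₂]
  have hpow : ∀ k : ℕ, (S * x * S) ^ k = S * x ^ k * S := by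
    intro k
    induction k with
    | zero => simp [hS]
    | succ n ih =>
      rw [pow_succ, ih, pow_succ]
      calc S * x ^ n * S * (S * x * S) = S * x ^ n * (S * S) * x * S := by
            simp only [Matrix.mul_assoc]
        _ = S * (x ^ n * x) * S := by rw [hS]; simp only [Matrix.mul_one, Matrix.mul_assoc]
  have hnilzy : IsNilpotent (z - y) := by
    have h1 : IsNilpotent (S * x * S) := by
      obtain ⟨k, hk⟩ := hx
      exact ⟨k, by rw [hpow, hk]; simp⟩
    rw [hconj] at h1
    simpa using h1.neg
  -- rank-one structure of y
  obtain ⟨u, hu0, hspan⟩ := (finrank_eq_one_iff' (K := ℂ) (V := L)).mp hL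
  have hcol : ∀ j : Fin p ⊕ Fin q, ∃ c : ℂ, ∀ i, y i j = c * (u : (Fin p ⊕ Fin q) → ℂ) i := by
    intro j
    have hmem : y *ᵥ Pi.single j 1 ∈ L := by
      apply hrange
      exact ⟨Pi.single j 1, by simp [Matrix.mulVecLin_apply]⟩
    obtain ⟨c, hc⟩ := hspan ⟨_, hmem⟩
    refine ⟨c, fun i => ?_⟩
    have h2 := congrArg (fun v : L => (v : (Fin p ⊕ Fin q) → ℂ) i) hc
    simpa using h2.symm
  choose w hw using hcol
  have hyvec : y = Matrix.vecMulVec (u : (Fin p ⊕ Fin q) → ℂ) w := by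
    ext i j
    rw [Matrix.vecMulVec_apply, hw j i, mul_comm]
  -- pass to the fraction field
  set K := RatFunc ℂ
  set φ : ℂ[X] →+* K := algebraMap ℂ[X] K with hφ
  have hφinj : Function.Injective φ := IsFractionRing.injective ℂ[X] K
  set A : Matrix (Fin p ⊕ Fin q) (Fin p ⊕ Fin q) K := (charmatrix z).map φ with hA
  have hAdet : A.det = φ z.charpoly := (RingHom.map_det φ (charmatrix z)).symm
  have hAunit : IsUnit A.det := by
    rw [hAdet, isUnit_iff_ne_zero]
    intro h
    exact (z.charpoly_monic.ne_zero) (hφinj (by simpa using h))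
  set U : (Fin p ⊕ Fin q) → K := fun i => φ (C ((u : (Fin p ⊕ Fin q) → ℂ) i)) with hU
  set W : (Fin p ⊕ Fin q) → K := fun j => φ (C (w j)) with hW
  have hymap : (RingHom.mapMatrix (C : ℂ →+* ℂ[X]) y).map φ
      = Matrix.replicateCol Unit U * Matrix.replicateRow Unit W := by
    rw [← Matrix.vecMulVec_eq]
    ext i j
    simp [hyvec, Matrix.vecMulVec_apply, hU, hW, ← _root_.map_mul]
  have hcharmx : ∀ M : Matrix (Fin p ⊕ Fin q) (Fin p ⊕ Fin q) ℂ, charmatrix M = Matrix.scalar (Fin p ⊕ Fin q) (X : ℂ[X])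
      - (C : ℂ →+* ℂ[X]).mapMatrix M := fun _ => rfl
  have hmap1 : (charmatrix (z + y)).map φ = A - Matrix.replicateCol Unit U * Matrix.replicateRow Unit W := by
    rw [← hymap, hA, hcharmx, hcharmx, map_add, ← Matrix.map_sub _ (fun a b => map_sub φ a b)]
    congr 1
    abel
  have hmap2 : (charmatrix (z - y)).map φ = A + Matrix.replicateCol Unit U * Matrix.replicateRow Unit W := by
    rw [← hymap, hA, hcharmx, hcharmx, map_sub, ← Matrix.map_add _ (fun a b => map_add φ a b)]
    congr 1
    abel
  -- the two charpoly computations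
  have hzy1 : (z + y).charpoly = X ^ (Fintype.card (Fin p ⊕ Fin q)) := by
    have h := aux_charpoly_of_nilpotent (ι := Fin p ⊕ Fin q) hx
    rwa [hxyz, add_comm y z] at h
  have hzy2 : (z - y).charpoly = X ^ (Fintype.card (Fin p ⊕ Fin q)) := aux_charpoly_of_nilpotent (ι := Fin p ⊕ Fin q) hnilzy
  have hdet1 : (A - Matrix.replicateCol Unit U * Matrix.replicateRow Unit W).det
      = φ (X ^ (Fintype.card (Fin p ⊕ Fin q))) := by
    rw [← hmap1]
    exact (RingHom.map_det φ (z + y).charmatrix).symm.trans (congrArg φ hzy1)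
  have hdet2 : (A + Matrix.replicateCol Unit U * Matrix.replicateRow Unit W).det
      = φ (X ^ (Fintype.card (Fin p ⊕ Fin q))) := by
    rw [← hmap2]
    exact (RingHom.map_det φ (z - y).charmatrix).symm.trans (congrArg φ hzy2)
  -- matrix determinant lemma for both signs
  set B : Matrix Unit Unit K := Matrix.replicateRow Unit W * A⁻¹ * Matrix.replicateCol Unit U with hB
  have e2 : (A + Matrix.replicateCol Unit U * Matrix.replicateRow Unit W).det = A.det * (1 + B).det :=
    Matrix.det_add_replicateCol_mul_replicateRow (ι := Unit) hAunit U W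
  have hnegcol : Matrix.replicateCol Unit (-U) = -(Matrix.replicateCol Unit U) := by
    ext i j
    simp [Matrix.replicateCol]
  have e1 : (A - Matrix.replicateCol Unit U * Matrix.replicateRow Unit W).det = A.det * (1 + (-B)).det := by
    have h := Matrix.det_add_replicateCol_mul_replicateRow (ι := Unit) hAunit (-U) W
    rw [hnegcol, Matrix.neg_mul, ← sub_eq_add_neg, Matrix.mul_neg, ← hB] at h
    exact h
  have hval2 : φ (X ^ (Fintype.card (Fin p ⊕ Fin q))) = A.det * (1 + B () ()) := by
    rw [← hdet2, e2, Matrix.det_unique (1 + B)]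
    simp [Matrix.add_apply, Matrix.one_apply]
  have hval1 : φ (X ^ (Fintype.card (Fin p ⊕ Fin q))) = A.det * (1 - B () ()) := by
    rw [← hdet1, e1, Matrix.det_unique (1 + (-B))]
    simp [Matrix.one_apply, sub_eq_add_neg]
  have h2ne : (2 : K) ≠ 0 := by
    intro h
    have h0 : φ (2 : ℂ[X]) = φ 0 := by rw [map_ofNat, map_zero, h]
    exact two_ne_zero (hφinj h0)
  have hAdet' : A.det = φ (X ^ (Fintype.card (Fin p ⊕ Fin q))) := by
    have hkey : 2 * φ (X ^ (Fintype.card (Fin p ⊕ Fin q))) = 2 * A.det := by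
      calc 2 * φ (X ^ (Fintype.card (Fin p ⊕ Fin q)))
          = A.det * (1 + B () ()) + A.det * (1 - B () ()) := by
            rw [← hval1, ← hval2]; ring
        _ = 2 * A.det := by ring
    exact (mul_left_cancel₀ h2ne hkey).symm
  have hcz : z.charpoly = X ^ (Fintype.card (Fin p ⊕ Fin q)) := by
    apply hφinj
    rw [← hAdet, hAdet']
  refine ⟨Fintype.card (Fin p ⊕ Fin q), ?_⟩
  have hfin := z.aeval_self_charpoly
  rw [hcz] at hfin
  simpa using hfin
end

section
/- Let a ∈ M_p(ℂ) with rank a ≤ 1, b ∈ M_{p×q}(ℂ), and c ∈ M_{q×p}(ℂ), and suppose the block matrix [[a, b],[c, 0]] ∈ M_{p+q}(ℂ) is nilpotent. Then for every α ∈ ℂ the block matrix [[α·a, b],[c, 0]] is nilpotent; equivalently, its characteristic polynomial equals t^{p+q}. -/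
open Matrix Polynomial

private lemma rank_le_one_outer {p : ℕ} (a : Matrix (Fin p) (Fin p) ℂ) (ha : a.rank ≤ 1) :
    ∃ u v : Fin p → ℂ, ∀ i j, a i j = u i * v j := by
  rw [Matrix.rank] at ha
  obtain ⟨u, hu⟩ :=
    ((Submodule.finrank_le_one_iff_isPrincipal (LinearMap.range a.mulVecLin)).mp ha).principal
  have hcol : ∀ j, ∃ c : ℂ, c • u = a *ᵥ Pi.single j 1 := by
    intro j
    have hmem : a *ᵥ Pi.single j 1 ∈ LinearMap.range a.mulVecLin := ⟨Pi.single j 1, rfl⟩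
    rw [hu, Submodule.mem_span_singleton] at hmem
    exact hmem
  choose v hv using hcol
  refine ⟨u, v, fun i j => ?_⟩
  have h := congrFun (hv j) i
  simp only [Pi.smul_apply, smul_eq_mul, Matrix.mulVec_single, mul_one, MulOpposite.op_one, one_smul, Matrix.col_apply] at h
  rw [← h]; ring

/-- If `a` has rank at most one and the block matrix `[[a, b], [c, 0]]` is nilpotent,
then `[[α a, b], [c, 0]]` is nilpotent for every scalar `α`; equivalently its
characteristic polynomial is `t^(p+q)`. -/
theorem stmt1 (p q : ℕ) (hp : 1 ≤ p) (hq : 1 ≤ q)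
    (a : Matrix (Fin p) (Fin p) ℂ) (ha : a.rank ≤ 1)
    (b : Matrix (Fin p) (Fin q) ℂ) (c : Matrix (Fin q) (Fin p) ℂ)
    (hnil : IsNilpotent (Matrix.fromBlocks a b c 0)) :
    ∀ α : ℂ, IsNilpotent (Matrix.fromBlocks (α • a) b c 0) ∧
      (Matrix.fromBlocks (α • a) b c 0).charpoly = X ^ (p + q) := by
  obtain ⟨u, v, huv⟩ := rank_le_one_outer a ha
  -- nilpotent implies charpoly = X^(p+q)
  have hcharn : ∀ (M : Matrix (Fin p ⊕ Fin q) (Fin p ⊕ Fin q) ℂ), IsNilpotent M →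
      M.charpoly = X ^ (p + q) := by
    intro M hM
    have h0 : M.charpoly - X ^ (Fintype.card (Fin p ⊕ Fin q)) = 0 :=
      (Matrix.isNilpotent_charpoly_sub_pow_of_isNilpotent hM).eq_zero
    have hc : Fintype.card (Fin p ⊕ Fin q) = p + q := by simp
    rw [hc] at h0
    exact sub_eq_zero.mp h0
  -- the matrix with -a is also nilpotent, via conjugation by diag(1,-1)
  have hEE : (Matrix.fromBlocks (1 : Matrix (Fin p) (Fin p) ℂ) 0 0
      (-1 : Matrix (Fin q) (Fin q) ℂ)) * (Matrix.fromBlocks 1 0 0 (-1)) = 1 := by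
    rw [Matrix.fromBlocks_multiply]
    simp [← Matrix.fromBlocks_one]
  set E : Matrix (Fin p ⊕ Fin q) (Fin p ⊕ Fin q) ℂ := Matrix.fromBlocks 1 0 0 (-1) with hE
  let uE : (Matrix (Fin p ⊕ Fin q) (Fin p ⊕ Fin q) ℂ)ˣ := ⟨E, E, hEE, hEE⟩
  have hconj : Matrix.fromBlocks (-a) b c 0 =
      (↑uE : Matrix _ _ ℂ) * (-(Matrix.fromBlocks a b c 0)) * (↑uE⁻¹ : Matrix _ _ ℂ) := by
    show Matrix.fromBlocks (-a) b c 0 = E * (-(Matrix.fromBlocks a b c 0)) * E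
    rw [hE]
    simp [Matrix.fromBlocks_neg, Matrix.fromBlocks_multiply]
  have hnegnil : IsNilpotent (Matrix.fromBlocks (-a) b c 0) := by
    obtain ⟨k, hk⟩ := hnil.neg
    exact ⟨k, by rw [hconj, Units.conj_pow, hk, mul_zero, zero_mul]⟩
  -- pass to the fraction field K = RatFunc ℂ
  let K := RatFunc ℂ
  let φ : ℂ[X] →+* K := algebraMap ℂ[X] K
  have hφ : Function.Injective φ := IsFractionRing.injective ℂ[X] K
  let ψ : ℂ →+* K := φ.comp Polynomial.C
  set N : Matrix (Fin p ⊕ Fin q) (Fin p ⊕ Fin q) ℂ := Matrix.fromBlocks 0 b c 0 with hN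
  set A : Matrix (Fin p ⊕ Fin q) (Fin p ⊕ Fin q) K := (Matrix.charmatrix N).map φ with hAdef
  let U : Fin p ⊕ Fin q → K := Sum.elim (fun i => ψ (u i)) 0
  let V : Fin p ⊕ Fin q → K := Sum.elim (fun i => ψ (v i)) 0
  have hA : IsUnit A.det := by
    have hdet : A.det = φ N.charpoly := by
      rw [Matrix.charpoly, hAdef]; exact (RingHom.map_det φ _).symm
    rw [isUnit_iff_ne_zero, hdet]
    intro h
    exact (Matrix.charpoly_monic N).ne_zero (hφ (by rwa [map_zero]))
  set s : K := (Matrix.replicateRow Unit V * A⁻¹ * Matrix.replicateCol Unit U) () () with hs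
  have hscal : ∀ cc : K,
      (Matrix.replicateRow Unit V * A⁻¹ * Matrix.replicateCol Unit (fun i => cc * U i)) () () = cc * s := by
    intro cc
    rw [hs]
    simp only [Matrix.mul_apply, Matrix.replicateCol_apply, Finset.mul_sum]
    rw [Finset.mul_sum]
    exact Finset.sum_congr rfl fun i _ => by ring
  have key : ∀ α : ℂ, φ ((Matrix.fromBlocks (α • a) b c 0).charpoly)
      = A.det * (1 + (-ψ α) * s) := by
    intro α
    have hmat : (Matrix.charmatrix (Matrix.fromBlocks (α • a) b c 0)).map φ
        = A + Matrix.replicateCol Unit (fun i => (-ψ α) * U i) * Matrix.replicateRow Unit V := by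
      ext i j
      have hrc : (Matrix.replicateCol Unit (fun i => (-ψ α) * U i) * Matrix.replicateRow Unit V) i j
          = (-ψ α) * U i * V j := by
        simp [Matrix.mul_apply]
      rw [Matrix.add_apply, hrc, hAdef]
      simp only [Matrix.map_apply]
      have hdiff : ψ (N i j) - ψ ((Matrix.fromBlocks (α • a) b c 0) i j)
          = (-ψ α) * U i * V j := by
        rw [← map_sub]
        cases i with
        | inl i => cases j with
          | inl j =>
            have h9 : N (Sum.inl i) (Sum.inl j)
                - (Matrix.fromBlocks (α • a) b c 0) (Sum.inl i) (Sum.inl j)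
                = (-α) * u i * v j := by
              simp [hN, huv]; ring
            rw [h9, _root_.map_mul, _root_.map_mul, map_neg]
            simp [U, V]
          | inr j => simp [hN, U, V]
        | inr i => cases j with
          | inl j => simp [hN, U, V]
          | inr j => simp [hN, U, V]
      have step : Matrix.charmatrix (Matrix.fromBlocks (α • a) b c 0) i j
          = Matrix.charmatrix N i j
            + (C (N i j) - C ((Matrix.fromBlocks (α • a) b c 0) i j)) := by
        simp only [Matrix.charmatrix_apply]; ring
      rw [step, map_add, map_sub]
      congr 1
    have hdet2 : φ (Matrix.fromBlocks (α • a) b c 0).charpoly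
        = ((Matrix.charmatrix (Matrix.fromBlocks (α • a) b c 0)).map φ).det := by
      rw [Matrix.charpoly]; exact RingHom.map_det φ _
    rw [hdet2, hmat, Matrix.det_add_replicateCol_mul_replicateRow hA]
    congr 1
    rw [Matrix.det_unique, Matrix.add_apply, Matrix.one_apply_eq]
    congr 1
    exact hscal (-ψ α)
  -- evaluate at α = 1 and α = -1
  have h1 : A.det * (1 - s) = φ (X ^ (p + q)) := by
    have := key 1
    rw [one_smul, hcharn _ hnil, _root_.map_one] at this
    rw [this]; ring
  have h2 : A.det * (1 + s) = φ (X ^ (p + q)) := by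
    have := key (-1)
    rw [neg_one_smul, hcharn _ hnegnil, _root_.map_neg, _root_.map_one, neg_neg] at this
    rw [this]; ring
  have hs0 : s = 0 := by
    have : CharZero K := charZero_of_injective_ringHom (f := φ) hφ
    have h3 : A.det * s + A.det * s = 0 := by linear_combination h2 - h1
    exact (hA.mul_right_eq_zero).mp (add_self_eq_zero.mp h3)
  have hAX : A.det = φ (X ^ (p + q)) := by
    rw [← h1, hs0]; ring
  intro α
  have hchar : (Matrix.fromBlocks (α • a) b c 0).charpoly = X ^ (p + q) := by
    apply hφ
    rw [key α, hs0, mul_zero, add_zero, mul_one, hAX]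
  refine ⟨?_, hchar⟩
  refine ⟨p + q, ?_⟩
  have := Matrix.aeval_self_charpoly (Matrix.fromBlocks (α • a) b c 0)
  rw [hchar] at this
  simpa using this
end

section
/- Let x ∈ M_n(ℂ) satisfy x² = 0 and suppose x^θ is nilpotent. Then x^{−θ} is nilpotent. -/
open Matrix

/-- If `x² = 0` and `x^θ` is nilpotent, then `x^{-θ}` is nilpotent. -/
theorem stmt3 (p q : ℕ) (hp : 1 ≤ p) (hq : 1 ≤ q)
    (x : Matrix (Fin p ⊕ Fin q) (Fin p ⊕ Fin q) ℂ)
    (hx : x ^ 2 = 0) (hθ : IsNilpotent (xTheta x)) :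
    IsNilpotent (xMTheta x) := by
  set a := x.toBlocks₁₁ with ha
  set b := x.toBlocks₁₂ with hb
  set c := x.toBlocks₂₁ with hc
  set d := x.toBlocks₂₂ with hd
  have hxb : x = Matrix.fromBlocks a b c d := (Matrix.fromBlocks_toBlocks x).symm
  rw [sq, hxb, Matrix.fromBlocks_multiply] at hx
  have h11 : a * a + b * c = 0 := by
    have := congrArg Matrix.toBlocks₁₁ hx
    simpa [Matrix.toBlocks_fromBlocks₁₁,
      (by ext i j; rfl : (0 : Matrix (Fin p ⊕ Fin q) (Fin p ⊕ Fin q) ℂ).toBlocks₁₁ = 0)] using this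
  have h22 : c * b + d * d = 0 := by
    have := congrArg Matrix.toBlocks₂₂ hx
    simpa [Matrix.toBlocks_fromBlocks₂₂,
      (by ext i j; rfl : (0 : Matrix (Fin p ⊕ Fin q) (Fin p ⊕ Fin q) ℂ).toBlocks₂₂ = 0)] using this
  have hbc : b * c = -(a * a) := eq_neg_of_add_eq_zero_right (by simpa [add_comm] using h11)
  have hcb : c * b = -(d * d) := eq_neg_of_add_eq_zero_right (by simpa [add_comm] using h22)
  have key : xMTheta x ^ 2 = -(xTheta x ^ 2) := by
    simp only [sq, xMTheta, xTheta, Matrix.fromBlocks_multiply, ← ha, ← hb, ← hc, ← hd,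
      Matrix.zero_mul, Matrix.mul_zero, zero_add, add_zero, hbc, hcb,
      Matrix.fromBlocks_neg, neg_zero]
  obtain ⟨k, hk⟩ := hθ
  refine ⟨2 * (2 * k), ?_⟩
  have : xMTheta x ^ (2 * (2 * k)) = (xMTheta x ^ 2) ^ (2 * k) := by
    rw [← pow_mul]
  rw [this, key, neg_pow]
  have hz : (xTheta x ^ 2) ^ (2 * k) = 0 := by
    rw [← pow_mul, show 2 * (2 * k) = k * 4 by ring, pow_mul, hk, zero_pow (by norm_num)]
  rw [hz, mul_zero]
end

section
/- Let x ∈ M_n(ℂ) satisfy x² = 0 and (x^θ)^k = 0 for some integer k ≥ 1. If k is even then (x^{−θ})^k = 0, and if k is odd then (x^{−θ})^{k+1} = 0. -/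
open Matrix

lemma key_sq {p q : ℕ} (x : Matrix (Fin p ⊕ Fin q) (Fin p ⊕ Fin q) ℂ)
    (hx : x ^ 2 = 0) : xMTheta x ^ 2 = -(xTheta x ^ 2) := by
  have h11 := congrArg Matrix.toBlocks₁₁ hx
  have h22 := congrArg Matrix.toBlocks₂₂ hx
  rw [← Matrix.fromBlocks_toBlocks x, pow_two, Matrix.fromBlocks_multiply] at h11 h22
  simp only [Matrix.toBlocks_fromBlocks₁₁, Matrix.toBlocks_fromBlocks₂₂] at h11 h22
  have hz1 : (0 : Matrix (Fin p ⊕ Fin q) (Fin p ⊕ Fin q) ℂ).toBlocks₁₁ = 0 := rfl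
  have hz2 : (0 : Matrix (Fin p ⊕ Fin q) (Fin p ⊕ Fin q) ℂ).toBlocks₂₂ = 0 := rfl
  rw [hz1] at h11
  rw [hz2] at h22
  have hBC : x.toBlocks₁₂ * x.toBlocks₂₁ = -(x.toBlocks₁₁ * x.toBlocks₁₁) := by
    linear_combination (norm := abel) h11
  have hCB : x.toBlocks₂₁ * x.toBlocks₁₂ = -(x.toBlocks₂₂ * x.toBlocks₂₂) := by
    linear_combination (norm := abel) h22
  simp only [xTheta, xMTheta, pow_two, Matrix.fromBlocks_multiply, Matrix.mul_zero,
    Matrix.zero_mul, add_zero, zero_add, hBC, hCB]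
  ext (i | i) (j | j) <;> simp [Matrix.fromBlocks]

lemma key_even {p q : ℕ} (x : Matrix (Fin p ⊕ Fin q) (Fin p ⊕ Fin q) ℂ)
    (hx : x ^ 2 = 0) (m : ℕ) : xMTheta x ^ (2 * m) = (-1) ^ m * xTheta x ^ (2 * m) := by
  rw [pow_mul, pow_mul, key_sq x hx, neg_pow]

/-- If `x² = 0` and `(x^θ)^k = 0` with `k ≥ 1`, then `(x^{-θ})^k = 0` if `k` is even,
and `(x^{-θ})^(k+1) = 0` if `k` is odd. -/
theorem stmt4 (p q : ℕ) (hp : 1 ≤ p) (hq : 1 ≤ q)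
    (x : Matrix (Fin p ⊕ Fin q) (Fin p ⊕ Fin q) ℂ)
    (hx : x ^ 2 = 0) (k : ℕ) (hk : 1 ≤ k) (hθ : (xTheta x) ^ k = 0) :
    (Even k → (xMTheta x) ^ k = 0) ∧ (Odd k → (xMTheta x) ^ (k + 1) = 0) := by
  constructor
  · rintro ⟨m, rfl⟩
    have : m + m = 2 * m := by ring
    rw [this] at hθ ⊢
    rw [key_even x hx, hθ, mul_zero]
  · rintro ⟨m, rfl⟩
    have : 2 * m + 1 + 1 = 2 * (m + 1) := by ring
    rw [this, key_even x hx]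
    have : xTheta x ^ (2 * (m + 1)) = xTheta x ^ (2 * m + 1) * xTheta x := by
      rw [← pow_succ]; ring_nf
    rw [this, hθ, Matrix.zero_mul, mul_zero]
end

section
/- Let v, u ∈ ℂ^p with v ≠ 0 and uᵀv = 0, let a ∈ M_{p×q}(ℂ) and b ∈ M_{q×p}(ℂ), and set x = [[v·uᵀ, a],[b, 0]] and z = [[0, a],[b, 0]] in M_n(ℂ). Then rank x − 1 ≤ rank z ≤ rank x, and rank z = rank x if and only if v lies in the column space of a or u lies in the column space of bᵀ. -/
open Matrix Module Submodule

namespace Stmt5Aux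

variable {p q : ℕ}

/-- The dot product with `u` as a linear functional. -/
noncomputable def dotL (u : Fin p → ℂ) : (Fin p → ℂ) →ₗ[ℂ] ℂ where
  toFun x := u ⬝ᵥ x
  map_add' x y := dotProduct_add u x y
  map_smul' c x := by simp [dotProduct_smul]

@[simp] lemma dotL_apply (u x : Fin p → ℂ) : dotL u x = u ⬝ᵥ x := rfl

lemma vecMulVec_mulVec (v u x : Fin p → ℂ) :
    vecMulVec v u *ᵥ x = (u ⬝ᵥ x) • v := by
  funext i
  simp only [vecMulVec_apply, mulVec, dotProduct, Pi.smul_apply, smul_eq_mul,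
    Finset.sum_mul]
  exact Finset.sum_congr rfl fun j _ => by ring

lemma mem_ker_fromBlocks (M : Matrix (Fin p) (Fin p) ℂ) (a : Matrix (Fin p) (Fin q) ℂ)
    (b : Matrix (Fin q) (Fin p) ℂ) (w : Fin p ⊕ Fin q → ℂ) :
    w ∈ LinearMap.ker (fromBlocks M a b 0).mulVecLin ↔
      M *ᵥ (w ∘ Sum.inl) + a *ᵥ (w ∘ Sum.inr) = 0 ∧ b *ᵥ (w ∘ Sum.inl) = 0 := by
  have hw : fromBlocks M a b 0 *ᵥ w =
      Sum.elim (M *ᵥ (w ∘ Sum.inl) + a *ᵥ (w ∘ Sum.inr)) (b *ᵥ (w ∘ Sum.inl)) := by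
    have h : w = Sum.elim (w ∘ Sum.inl) (w ∘ Sum.inr) := funext fun s => by cases s <;> rfl
    rw [h, fromBlocks_mulVec]
    simp
  rw [LinearMap.mem_ker, mulVecLin_apply, hw]
  constructor
  · intro h
    exact ⟨funext fun i => congrFun h (Sum.inl i), funext fun j => congrFun h (Sum.inr j)⟩
  · rintro ⟨h1, h2⟩
    funext s
    cases s with
    | inl i => exact congrFun h1 i
    | inr j => exact congrFun h2 j

/-- If `u ⬝ᵥ x = 0` for all `x` in the kernel of `b`, then `u` is in the row space of `b`. -/
lemma mem_range_transpose (b : Matrix (Fin q) (Fin p) ℂ) (u : Fin p → ℂ)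
    (h : ∀ x : Fin p → ℂ, b *ᵥ x = 0 → u ⬝ᵥ x = 0) :
    u ∈ LinearMap.range bᵀ.mulVecLin := by
  classical
  set L : Fin q → (Fin p → ℂ) →ₗ[ℂ] ℂ := fun i => dotL (b i) with hL
  have hker : ⨅ i, LinearMap.ker (L i) ≤ LinearMap.ker (dotL u) := by
    intro x hx
    simp only [Submodule.mem_iInf, LinearMap.mem_ker, hL, dotL_apply] at hx ⊢
    exact h x (funext fun i => hx i)
  obtain ⟨c, hc⟩ := (mem_span_range_iff_exists_fun ℂ).1 (mem_span_of_iInf_ker_le_ker hker)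
  refine ⟨c, funext fun j => ?_⟩
  have hj := LinearMap.congr_fun hc (Pi.single j 1)
  simp only [LinearMap.coe_sum, Finset.sum_apply, LinearMap.smul_apply, hL, dotL_apply,
    dotProduct_single, smul_eq_mul, mul_one] at hj
  rw [mulVecLin_apply]
  rw [← hj]
  simp [mulVec, dotProduct, transpose_apply, mul_comm]

end Stmt5Aux

open Stmt5Aux

/-- Let `x = [[v uᵀ, a], [b, 0]]` and `z = [[0, a], [b, 0]]`, where `v ≠ 0` and
`uᵀ v = 0`.  Then `rank x - 1 ≤ rank z ≤ rank x`, and `rank z = rank x` iff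
`v` lies in the column space of `a` or `u` lies in the column space of `bᵀ`. -/
theorem stmt5 (p q : ℕ) (hp : 1 ≤ p) (hq : 1 ≤ q)
    (v u : Fin p → ℂ) (hv : v ≠ 0) (huv : u ⬝ᵥ v = 0)
    (a : Matrix (Fin p) (Fin q) ℂ) (b : Matrix (Fin q) (Fin p) ℂ) :
    (Matrix.fromBlocks (Matrix.vecMulVec v u) a b 0).rank - 1 ≤
        (Matrix.fromBlocks 0 a b 0).rank ∧
    (Matrix.fromBlocks 0 a b 0).rank ≤
        (Matrix.fromBlocks (Matrix.vecMulVec v u) a b 0).rank ∧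
    ((Matrix.fromBlocks 0 a b 0).rank =
        (Matrix.fromBlocks (Matrix.vecMulVec v u) a b 0).rank ↔
      v ∈ LinearMap.range a.mulVecLin ∨ u ∈ LinearMap.range bᵀ.mulVecLin) := by
  classical
  set X : Matrix (Fin p ⊕ Fin q) (Fin p ⊕ Fin q) ℂ := fromBlocks (vecMulVec v u) a b 0 with hXdef
  set Z : Matrix (Fin p ⊕ Fin q) (Fin p ⊕ Fin q) ℂ := fromBlocks 0 a b 0 with hZdef
  set kx := LinearMap.ker X.mulVecLin with hkx
  set kz := LinearMap.ker Z.mulVecLin with hkz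
  have memX : ∀ w : Fin p ⊕ Fin q → ℂ, w ∈ kx ↔
      (u ⬝ᵥ (w ∘ Sum.inl)) • v + a *ᵥ (w ∘ Sum.inr) = 0 ∧ b *ᵥ (w ∘ Sum.inl) = 0 := by
    intro w
    rw [hkx, hXdef, mem_ker_fromBlocks, vecMulVec_mulVec]
  have memZ : ∀ w : Fin p ⊕ Fin q → ℂ, w ∈ kz ↔
      a *ᵥ (w ∘ Sum.inr) = 0 ∧ b *ᵥ (w ∘ Sum.inl) = 0 := by
    intro w
    rw [hkz, hZdef, mem_ker_fromBlocks, zero_mulVec, zero_add]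
  have hrank : X.rank + finrank ℂ kx = Z.rank + finrank ℂ kz := by
    rw [Matrix.rank, Matrix.rank, hkx, hkz,
      LinearMap.finrank_range_add_finrank_ker, LinearMap.finrank_range_add_finrank_ker]
  by_cases hcase : v ∈ LinearMap.range a.mulVecLin ∨ u ∈ LinearMap.range bᵀ.mulVecLin
  · -- ranks are equal
    have hkeq : finrank ℂ kz = finrank ℂ kx := by
      rcases hcase with ⟨y₀, hy₀⟩ | ⟨t₀, ht₀⟩
      · -- v = a *ᵥ y₀ : kernels are linearly equivalent
        rw [mulVecLin_apply] at hy₀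
        set Y₀ : Fin p ⊕ Fin q → ℂ := Sum.elim 0 y₀ with hY₀
        have hY₀l : Y₀ ∘ Sum.inl = 0 := rfl
        have hY₀r : Y₀ ∘ Sum.inr = y₀ := rfl
        set f : ((Fin p ⊕ Fin q) → ℂ) →ₗ[ℂ] ((Fin p ⊕ Fin q) → ℂ) :=
          ((dotL u).comp (LinearMap.funLeft ℂ ℂ Sum.inl)).smulRight Y₀ with hf
        have hfapp : ∀ w, f w = (u ⬝ᵥ (w ∘ Sum.inl)) • Y₀ := fun w => rfl
        have hff : ∀ w, f (f w) = 0 := by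
          intro w
          rw [hfapp, hfapp]
          have : ((u ⬝ᵥ (w ∘ Sum.inl)) • Y₀) ∘ Sum.inl = 0 := by
            funext i; simp [hY₀]
          rw [this]
          simp
        set e : ((Fin p ⊕ Fin q) → ℂ) ≃ₗ[ℂ] ((Fin p ⊕ Fin q) → ℂ) :=
          LinearEquiv.ofLinear (LinearMap.id - f) (LinearMap.id + f)
            (LinearMap.ext fun w => by
              simp only [LinearMap.comp_apply, LinearMap.sub_apply, LinearMap.add_apply,
                LinearMap.id_apply, map_add, hff w, add_zero]
              abel)
            (LinearMap.ext fun w => by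
              simp only [LinearMap.comp_apply, LinearMap.sub_apply, LinearMap.add_apply,
                LinearMap.id_apply, map_sub, hff w, sub_zero]
              abel) with he
        have hsubl : ∀ (w : Fin p ⊕ Fin q → ℂ) (c : ℂ), (w - c • Y₀) ∘ Sum.inl = w ∘ Sum.inl := by
          intro w c; funext i; simp [hY₀]
        have hsubr : ∀ (w : Fin p ⊕ Fin q → ℂ) (c : ℂ),
            (w - c • Y₀) ∘ Sum.inr = w ∘ Sum.inr - c • y₀ := by
          intro w c; funext j; simp [hY₀]
        have haddl : ∀ (w : Fin p ⊕ Fin q → ℂ) (c : ℂ), (w + c • Y₀) ∘ Sum.inl = w ∘ Sum.inl := by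
          intro w c; funext i; simp [hY₀]
        have haddr : ∀ (w : Fin p ⊕ Fin q → ℂ) (c : ℂ),
            (w + c • Y₀) ∘ Sum.inr = w ∘ Sum.inr + c • y₀ := by
          intro w c; funext j; simp [hY₀]
        have hmap1 : kz.map (e : ((Fin p ⊕ Fin q) → ℂ) →ₗ[ℂ] _) ≤ kx := by
          rintro _ ⟨w, hw, rfl⟩
          rw [SetLike.mem_coe, memZ] at hw
          have : e w = w - (u ⬝ᵥ (w ∘ Sum.inl)) • Y₀ := by
            simp [he, LinearEquiv.ofLinear_apply, hfapp]
          simp only [LinearEquiv.coe_coe] at *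
          rw [memX, this, hsubl, hsubr]
          refine ⟨?_, hw.2⟩
          rw [mulVec_sub, mulVec_smul, hy₀, hw.1]
          simp
        have hmap2 : kx.map (e.symm : ((Fin p ⊕ Fin q) → ℂ) →ₗ[ℂ] _) ≤ kz := by
          rintro _ ⟨w, hw, rfl⟩
          rw [SetLike.mem_coe, memX] at hw
          have : e.symm w = w + (u ⬝ᵥ (w ∘ Sum.inl)) • Y₀ := by
            simp [he, LinearEquiv.ofLinear_symm_apply, hfapp]
          simp only [LinearEquiv.coe_coe] at *
          rw [memZ, this, haddl, haddr]
          refine ⟨?_, hw.2⟩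
          rw [mulVec_add, mulVec_smul, hy₀]
          have := hw.1
          linear_combination (norm := module) this
        have h1 : finrank ℂ kz ≤ finrank ℂ kx :=
          (LinearEquiv.finrank_map_eq e kz).symm.trans_le (Submodule.finrank_mono hmap1)
        have h2 : finrank ℂ kx ≤ finrank ℂ kz :=
          (LinearEquiv.finrank_map_eq e.symm kx).symm.trans_le (Submodule.finrank_mono hmap2)
        omega
      · -- u = bᵀ *ᵥ t₀ : kernels coincide
        rw [mulVecLin_apply] at ht₀
        have : kz = kx := by
          ext w
          rw [memZ, memX]
          constructor
          · rintro ⟨h1, h2⟩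
            refine ⟨?_, h2⟩
            have : u ⬝ᵥ (w ∘ Sum.inl) = 0 := by
              rw [← ht₀, mulVec_transpose, ← dotProduct_mulVec, h2, dotProduct_zero]
            rw [this, zero_smul, zero_add, h1]
          · rintro ⟨h1, h2⟩
            refine ⟨?_, h2⟩
            have hu : u ⬝ᵥ (w ∘ Sum.inl) = 0 := by
              rw [← ht₀, mulVec_transpose, ← dotProduct_mulVec, h2, dotProduct_zero]
            rw [hu, zero_smul, zero_add] at h1
            exact h1
        rw [this]
    have hre : Z.rank = X.rank := by omega
    exact ⟨by omega, by omega, iff_of_true hre hcase⟩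
  · -- ranks differ by one
    push_neg at hcase
    obtain ⟨hva, hub⟩ := hcase
    obtain ⟨x₁, hbx₁, hux₁⟩ : ∃ x₁, b *ᵥ x₁ = 0 ∧ u ⬝ᵥ x₁ ≠ 0 := by
      by_contra hno
      push_neg at hno
      exact hub (mem_range_transpose b u hno)
    set w₁ : Fin p ⊕ Fin q → ℂ := Sum.elim x₁ 0 with hw₁
    have hw₁l : w₁ ∘ Sum.inl = x₁ := rfl
    have hw₁r : w₁ ∘ Sum.inr = 0 := rfl
    have hw₁z : w₁ ∈ kz := by
      rw [memZ, hw₁l, hw₁r]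
      simp [hbx₁]
    have hw₁x : w₁ ∉ kx := by
      rw [memX, hw₁l, hw₁r]
      rintro ⟨h1, -⟩
      rw [mulVec_zero, add_zero] at h1
      exact hv ((smul_eq_zero.1 h1).resolve_left hux₁)
    have hle : kx ≤ kz := by
      intro w hw
      rw [memX] at hw
      rw [memZ]
      refine ⟨?_, hw.2⟩
      by_cases hc : u ⬝ᵥ (w ∘ Sum.inl) = 0
      · rw [hc, zero_smul, zero_add] at hw
        exact hw.1
      · exfalso
        apply hva
        refine ⟨-(u ⬝ᵥ (w ∘ Sum.inl))⁻¹ • (w ∘ Sum.inr), ?_⟩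
        rw [mulVecLin_apply, mulVec_smul]
        have h1 := hw.1
        have : a *ᵥ (w ∘ Sum.inr) = -((u ⬝ᵥ (w ∘ Sum.inl)) • v) := by
          linear_combination (norm := module) h1
        rw [this, smul_neg, neg_smul, neg_neg, smul_smul, inv_mul_cancel₀ hc, one_smul]
    have hlt : kx < kz := lt_of_le_of_ne hle fun h => hw₁x (h ▸ hw₁z)
    have h1 : finrank ℂ kx + 1 ≤ finrank ℂ kz :=
      Submodule.finrank_lt_finrank_of_lt hlt
    have h2 : finrank ℂ kz ≤ finrank ℂ kx + 1 := by
      have hsub : kz ≤ kx ⊔ (ℂ ∙ w₁) := by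
        intro w hw
        rw [memZ] at hw
        set c : ℂ := (u ⬝ᵥ (w ∘ Sum.inl)) / (u ⬝ᵥ x₁) with hc
        have hmem : w - c • w₁ ∈ kx := by
          rw [memX]
          have hl : (w - c • w₁) ∘ Sum.inl = w ∘ Sum.inl - c • x₁ := by
            funext i; simp [hw₁]
          have hr : (w - c • w₁) ∘ Sum.inr = w ∘ Sum.inr := by
            funext j; simp [hw₁]
          rw [hl, hr]
          constructor
          · have : u ⬝ᵥ (w ∘ Sum.inl - c • x₁) = 0 := by
              rw [dotProduct_sub, dotProduct_smul, hc, smul_eq_mul,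
                div_mul_cancel₀ _ hux₁, sub_self]
            rw [this, zero_smul, zero_add, hw.1]
          · rw [mulVec_sub, mulVec_smul, hbx₁, hw.2, smul_zero, sub_zero]
        have : w = (w - c • w₁) + c • w₁ := by abel
        rw [this]
        exact Submodule.add_mem_sup hmem
          (Submodule.smul_mem _ _ (Submodule.mem_span_singleton_self w₁))
      have hw₁ne : w₁ ≠ 0 := by
        intro h
        apply hux₁
        have : x₁ = 0 := by
          funext i
          exact congrFun h (Sum.inl i)
        rw [this, dotProduct_zero]
      have hfr : finrank ℂ (ℂ ∙ w₁) = 1 := finrank_span_singleton hw₁ne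
      have hsup := Submodule.finrank_sup_add_finrank_inf_eq kx (ℂ ∙ w₁)
      have := Submodule.finrank_mono hsub
      omega
    have hkeq : finrank ℂ kz = finrank ℂ kx + 1 := le_antisymm h2 h1
    have hXr : X.rank = Z.rank + 1 := by omega
    refine ⟨by omega, by omega, ?_⟩
    constructor
    · intro h; omega
    · intro h
      rcases h with h | h
      · exact absurd h hva
      · exact absurd h hub
end

section
/- Let a ∈ M_{p×q}(ℂ) and b ∈ M_{q×p}(ℂ) with ab = 0 and ba = 0, set z = [[0, a],[b, 0]] ∈ M_n(ℂ), let v ∈ ℂ^p be nonzero and let L = ℂ·v ⊆ V₁. Then for x ∈ M_n(ℂ) the following are equivalent: (i) x² = 0, x^{−θ} = z, the column space of x^θ is contained in L, and L is contained in the kernel of x^θ; (ii) there exists u ∈ ℂ^p with aᵀu = 0, uᵀv = 0, and (bv = 0 or u = 0), such that x = [[v·uᵀ, a],[b, 0]]. In particular, if bv ≠ 0 then the only x satisfying (i) is x = z. -/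
open Matrix

lemma aux_vecMulVec_mulVec {p m : ℕ} (v : Fin p → ℂ) (u : Fin m → ℂ) (w : Fin m → ℂ) :
    Matrix.vecMulVec v u *ᵥ w = (u ⬝ᵥ w) • v := by
  ext i
  simp [Matrix.mulVec, Matrix.vecMulVec_apply, dotProduct, Finset.mul_sum, mul_comm,
    mul_left_comm]

lemma aux_vecMulVec_mul {p m k : ℕ} (v : Fin p → ℂ) (u : Fin m → ℂ)
    (a : Matrix (Fin m) (Fin k) ℂ) :
    Matrix.vecMulVec v u * a = Matrix.of fun i j => v i * (aᵀ *ᵥ u) j := by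
  ext i j
  simp [Matrix.mul_apply, Matrix.vecMulVec_apply, Matrix.mulVec, dotProduct, Finset.mul_sum,
    mul_comm, mul_left_comm]

lemma aux_mul_vecMulVec {p m k : ℕ} (b : Matrix (Fin k) (Fin p) ℂ) (v : Fin p → ℂ)
    (u : Fin m → ℂ) :
    b * Matrix.vecMulVec v u = Matrix.of fun i j => (b *ᵥ v) i * u j := by
  ext i j
  simp [Matrix.mul_apply, Matrix.vecMulVec_apply, Matrix.mulVec, dotProduct, Finset.sum_mul,
    mul_assoc]

lemma key (p q : ℕ)
    (a : Matrix (Fin p) (Fin q) ℂ) (b : Matrix (Fin q) (Fin p) ℂ)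
    (hab : a * b = 0) (hba : b * a = 0)
    (v : Fin p → ℂ) (hv : v ≠ 0)
    (x : Matrix (Fin p ⊕ Fin q) (Fin p ⊕ Fin q) ℂ) :
    (x ^ 2 = 0 ∧ xMTheta x = Matrix.fromBlocks 0 a b 0 ∧
        LinearMap.range (xTheta x).mulVecLin ≤
          Submodule.span ℂ {(Sum.elim v 0 : Fin p ⊕ Fin q → ℂ)} ∧
        Submodule.span ℂ {(Sum.elim v 0 : Fin p ⊕ Fin q → ℂ)} ≤
          LinearMap.ker (xTheta x).mulVecLin)
      ↔ (∃ u : Fin p → ℂ, aᵀ *ᵥ u = 0 ∧ u ⬝ᵥ v = 0 ∧ (b *ᵥ v = 0 ∨ u = 0) ∧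
          x = Matrix.fromBlocks (Matrix.vecMulVec v u) a b 0) := by
  obtain ⟨i0, hi0⟩ : ∃ i, v i ≠ 0 := by
    by_contra h; push_neg at h; exact hv (funext h)
  constructor
  · rintro ⟨hsq, hmt, hrange, hker⟩
    -- extract blocks from hmt
    have h12 : x.toBlocks₁₂ = a := by
      have := congrArg Matrix.toBlocks₁₂ hmt
      simpa [xMTheta] using this
    have h21 : x.toBlocks₂₁ = b := by
      have := congrArg Matrix.toBlocks₂₁ hmt
      simpa [xMTheta] using this
    -- range condition gives structure of x^θ
    have hmem : ∀ w : Fin p ⊕ Fin q → ℂ, ∃ c : ℂ,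
        (xTheta x) *ᵥ w = c • Sum.elim v 0 := by
      intro w
      have : (xTheta x) *ᵥ w ∈ Submodule.span ℂ {(Sum.elim v 0 : Fin p ⊕ Fin q → ℂ)} :=
        hrange ⟨w, rfl⟩
      rw [Submodule.mem_span_singleton] at this
      obtain ⟨c, hc⟩ := this
      exact ⟨c, hc.symm⟩
    -- x.toBlocks₂₂ = 0
    have h22 : x.toBlocks₂₂ = 0 := by
      ext i j
      obtain ⟨c, hc⟩ := hmem (Sum.elim 0 (Pi.single j 1))
      have := congrFun hc (Sum.inr i)
      simpa [xTheta, Matrix.fromBlocks_mulVec, Function.comp] using this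
    -- columns of x.toBlocks₁₁ are multiples of v
    have hcol : ∀ j : Fin p, ∃ c : ℂ, ∀ i, x.toBlocks₁₁ i j = c * v i := by
      intro j
      obtain ⟨c, hc⟩ := hmem (Sum.elim (Pi.single j 1) 0)
      refine ⟨c, fun i => ?_⟩
      have := congrFun hc (Sum.inl i)
      simpa [xTheta, Matrix.fromBlocks_mulVec, Function.comp] using this
    set u : Fin p → ℂ := fun j => x.toBlocks₁₁ i0 j / v i0 with hu
    have h11 : x.toBlocks₁₁ = Matrix.vecMulVec v u := by
      ext i j
      obtain ⟨c, hc⟩ := hcol j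
      have hcj : u j = c := by
        rw [hu]; simp only [hc i0]
        field_simp
      rw [Matrix.vecMulVec_apply, hcj, hc i, mul_comm]
    -- x = fromBlocks (vecMulVec v u) a b 0
    have hx : x = Matrix.fromBlocks (Matrix.vecMulVec v u) a b 0 := by
      rw [← h11, ← h12, ← h21, ← h22, Matrix.fromBlocks_toBlocks]
    -- kernel condition gives u ⬝ᵥ v = 0
    have huv : u ⬝ᵥ v = 0 := by
      have hk : (xTheta x) *ᵥ Sum.elim v 0 = 0 :=
        hker (Submodule.mem_span_singleton_self _)
      have := congrFun hk (Sum.inl i0)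
      rw [xTheta, h11, h22] at this
      simp only [Matrix.fromBlocks_mulVec, Sum.elim_inl, Sum.elim_comp_inl,
        Sum.elim_comp_inr] at this
      rw [aux_vecMulVec_mulVec] at this
      simp at this
      rcases this with h | h
      · exact h
      · exact absurd h hi0
    -- x² = 0 gives the rest
    have hsq' : Matrix.fromBlocks
        (Matrix.vecMulVec v u * Matrix.vecMulVec v u + a * b)
        (Matrix.vecMulVec v u * a + a * (0 : Matrix (Fin q) (Fin q) ℂ))
        (b * Matrix.vecMulVec v u + (0 : Matrix (Fin q) (Fin q) ℂ) * b)
        (b * a + (0 : Matrix (Fin q) (Fin q) ℂ) * (0 : Matrix (Fin q) (Fin q) ℂ)) =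
        (0 : Matrix (Fin p ⊕ Fin q) (Fin p ⊕ Fin q) ℂ) := by
      rw [← Matrix.fromBlocks_multiply, ← hx, ← pow_two, hsq]
    have h12sq : Matrix.vecMulVec v u * a = 0 := by
      have := congrArg Matrix.toBlocks₁₂ hsq'
      have h0 : (0 : Matrix (Fin p ⊕ Fin q) (Fin p ⊕ Fin q) ℂ).toBlocks₁₂ = 0 := by
        ext i j; rfl
      simpa [h0] using this
    have h21sq : b * Matrix.vecMulVec v u = 0 := by
      have := congrArg Matrix.toBlocks₂₁ hsq'
      have h0 : (0 : Matrix (Fin p ⊕ Fin q) (Fin p ⊕ Fin q) ℂ).toBlocks₂₁ = 0 := by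
        ext i j; rfl
      simpa [h0] using this
    have hau : aᵀ *ᵥ u = 0 := by
      ext j
      have := congrFun (congrFun (aux_vecMulVec_mul v u a ▸ h12sq) i0) j
      simp only [Matrix.of_apply, Matrix.zero_apply] at this
      rcases mul_eq_zero.mp this with h | h
      · exact absurd h hi0
      · exact h
    have hbvu : b *ᵥ v = 0 ∨ u = 0 := by
      by_cases hbv : b *ᵥ v = 0
      · exact Or.inl hbv
      · right
        obtain ⟨k, hk⟩ : ∃ k, (b *ᵥ v) k ≠ 0 := by
          by_contra h; push_neg at h; exact hbv (funext h)
        ext j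
        have := congrFun (congrFun (aux_mul_vecMulVec b v u ▸ h21sq) k) j
        simp only [Matrix.of_apply, Matrix.zero_apply] at this
        rcases mul_eq_zero.mp this with h | h
        · exact absurd h hk
        · exact h
    exact ⟨u, hau, huv, hbvu, hx⟩
  · rintro ⟨u, hau, huv, hbvu, rfl⟩
    have hth : xTheta (Matrix.fromBlocks (Matrix.vecMulVec v u) a b 0) =
        Matrix.fromBlocks (Matrix.vecMulVec v u) 0 0 0 := by
      simp [xTheta]
    refine ⟨?_, ?_, ?_, ?_⟩
    · have e1 : Matrix.vecMulVec v u * Matrix.vecMulVec v u = 0 := by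
        rw [aux_mul_vecMulVec]
        ext i j
        simp [aux_vecMulVec_mulVec, huv]
      have e2 : Matrix.vecMulVec v u * a = 0 := by
        rw [aux_vecMulVec_mul]
        ext i j
        simp [hau]
      have e3 : b * Matrix.vecMulVec v u = 0 := by
        rw [aux_mul_vecMulVec]
        ext i j
        rcases hbvu with h | h <;> simp [h]
      rw [pow_two, Matrix.fromBlocks_multiply, e1, e2, e3, hab, hba]
      simp
    · simp [xMTheta]
    · rintro w ⟨y, rfl⟩
      rw [Submodule.mem_span_singleton]
      refine ⟨u ⬝ᵥ (y ∘ Sum.inl), ?_⟩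
      rw [Matrix.mulVecLin_apply, hth, Matrix.fromBlocks_mulVec]
      ext (i | i) <;>
        simp [aux_vecMulVec_mulVec, Pi.smul_apply, smul_eq_mul]
    · rw [Submodule.span_singleton_le_iff_mem, LinearMap.mem_ker, Matrix.mulVecLin_apply,
        hth, Matrix.fromBlocks_mulVec]
      ext (i | i) <;>
        simp [aux_vecMulVec_mulVec, huv]

/-- Let `ab = 0`, `ba = 0`, `z = [[0, a], [b, 0]]`, and let `L = ℂ v ⊆ V₁` (with
`v` viewed inside `ℂ^n = ℂ^p × ℂ^q` as `Sum.elim v 0`).  Then `x² = 0`,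
`x^{-θ} = z`, `Im x^θ ⊆ L ⊆ ker x^θ` hold iff `x = [[v uᵀ, a], [b, 0]]` for some
`u` with `aᵀ u = 0`, `uᵀ v = 0` and (`b v = 0` or `u = 0`).  In particular, if
`b v ≠ 0`, the only such `x` is `z` itself. -/
theorem stmt7 (p q : ℕ) (hp : 1 ≤ p) (hq : 1 ≤ q)
    (a : Matrix (Fin p) (Fin q) ℂ) (b : Matrix (Fin q) (Fin p) ℂ)
    (hab : a * b = 0) (hba : b * a = 0)
    (v : Fin p → ℂ) (hv : v ≠ 0) :
    (∀ x : Matrix (Fin p ⊕ Fin q) (Fin p ⊕ Fin q) ℂ,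
      (x ^ 2 = 0 ∧ xMTheta x = Matrix.fromBlocks 0 a b 0 ∧
        LinearMap.range (xTheta x).mulVecLin ≤
          Submodule.span ℂ {(Sum.elim v 0 : Fin p ⊕ Fin q → ℂ)} ∧
        Submodule.span ℂ {(Sum.elim v 0 : Fin p ⊕ Fin q → ℂ)} ≤
          LinearMap.ker (xTheta x).mulVecLin)
      ↔ (∃ u : Fin p → ℂ, aᵀ *ᵥ u = 0 ∧ u ⬝ᵥ v = 0 ∧ (b *ᵥ v = 0 ∨ u = 0) ∧
          x = Matrix.fromBlocks (Matrix.vecMulVec v u) a b 0)) ∧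
    (b *ᵥ v ≠ 0 →
      ∀ x : Matrix (Fin p ⊕ Fin q) (Fin p ⊕ Fin q) ℂ,
        (x ^ 2 = 0 ∧ xMTheta x = Matrix.fromBlocks 0 a b 0 ∧
          LinearMap.range (xTheta x).mulVecLin ≤
            Submodule.span ℂ {(Sum.elim v 0 : Fin p ⊕ Fin q → ℂ)} ∧
          Submodule.span ℂ {(Sum.elim v 0 : Fin p ⊕ Fin q → ℂ)} ≤
            LinearMap.ker (xTheta x).mulVecLin) →
        x = Matrix.fromBlocks 0 a b 0) := by
  refine ⟨fun x => key p q a b hab hba v hv x, fun hbv x hx => ?_⟩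
  obtain ⟨u, hau, huv, hbvu, hxeq⟩ := (key p q a b hab hba v hv x).mp hx
  rcases hbvu with h | h
  · exact absurd h hbv
  · have e0 : Matrix.vecMulVec v (0 : Fin p → ℂ) = 0 := by
      ext i j
      rw [Matrix.vecMulVec_apply]
      simp
    rw [hxeq, h, e0]
end

section
/- Let a ∈ M_{p×q}(ℂ) and b ∈ M_{q×p}(ℂ) with ab = 0 and ba = 0, and let v, u ∈ ℂ^p with aᵀu = 0 and uᵀv = 0. If v lies in the column space of a, then rank [[v·uᵀ, a],[b, 0]] = rank a + rank b. -/
open Matrix Module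

private lemma finrank_prod_submodule {m n : Type*} [Fintype m] [Fintype n]
    (P : Submodule ℂ (m → ℂ)) (Q : Submodule ℂ (n → ℂ)) :
    finrank ℂ (P.prod Q) = finrank ℂ P + finrank ℂ Q := by
  have e : (P.prod Q) ≃ₗ[ℂ] P × Q :=
    { toFun := fun x => (⟨x.1.1, x.2.1⟩, ⟨x.1.2, x.2.2⟩)
      invFun := fun x => ⟨(x.1.1, x.2.1), x.1.2, x.2.2⟩
      map_add' := fun _ _ => rfl
      map_smul' := fun _ _ => rfl
      left_inv := fun _ => rfl
      right_inv := fun _ => rfl }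
  rw [e.finrank_eq, Module.finrank_prod]

private lemma rank_antidiag {p q : ℕ} (a : Matrix (Fin p) (Fin q) ℂ)
    (b : Matrix (Fin q) (Fin p) ℂ) :
    (fromBlocks (0 : Matrix (Fin p) (Fin p) ℂ) a b
      (0 : Matrix (Fin q) (Fin q) ℂ)).rank = a.rank + b.rank := by
  classical
  set e := LinearEquiv.sumArrowLequivProdArrow (Fin p) (Fin q) ℂ ℂ with he
  have hsymm : ∀ (y₁ : Fin p → ℂ) (y₂ : Fin q → ℂ),
      e.symm (y₁, y₂) = Sum.elim y₁ y₂ := by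
    intro y₁ y₂; funext i; cases i <;> rfl
  have hmv : ∀ x : (Fin p ⊕ Fin q) → ℂ,
      (fromBlocks (0 : Matrix (Fin p) (Fin p) ℂ) a b
        (0 : Matrix (Fin q) (Fin q) ℂ)) *ᵥ x
        = Sum.elim (a *ᵥ (x ∘ Sum.inr)) (b *ᵥ (x ∘ Sum.inl)) := by
    intro x
    conv_lhs => rw [← Sum.elim_comp_inl_inr x]
    rw [fromBlocks_mulVec]
    simp
  have hrange : LinearMap.range (fromBlocks (0 : Matrix (Fin p) (Fin p) ℂ) a b
      (0 : Matrix (Fin q) (Fin q) ℂ)).mulVecLin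
      = Submodule.map (e.symm : ((Fin p → ℂ) × (Fin q → ℂ)) →ₗ[ℂ] _)
        ((LinearMap.range a.mulVecLin).prod (LinearMap.range b.mulVecLin)) := by
    ext y
    constructor
    · rintro ⟨x, rfl⟩
      refine ⟨(a *ᵥ (x ∘ Sum.inr), b *ᵥ (x ∘ Sum.inl)), ⟨⟨_, rfl⟩, ⟨_, rfl⟩⟩, ?_⟩
      simp only [mulVecLin_apply, LinearEquiv.coe_coe, hsymm, hmv]
    · rintro ⟨⟨y₁, y₂⟩, ⟨⟨x₂, rfl⟩, ⟨x₁, rfl⟩⟩, rfl⟩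
      refine ⟨Sum.elim x₁ x₂, ?_⟩
      simp only [mulVecLin_apply, LinearEquiv.coe_coe, hsymm, hmv]
      simp
  rw [Matrix.rank, hrange]
  rw [LinearEquiv.finrank_map_eq]
  rw [finrank_prod_submodule]
  rfl

/-- If `ab = 0`, `ba = 0`, `aᵀ u = 0`, `uᵀ v = 0` and `v` lies in the column
space of `a`, then `rank [[v uᵀ, a], [b, 0]] = rank a + rank b`. -/
theorem stmt8 (p q : ℕ) (hp : 1 ≤ p) (hq : 1 ≤ q)
    (a : Matrix (Fin p) (Fin q) ℂ) (b : Matrix (Fin q) (Fin p) ℂ)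
    (hab : a * b = 0) (hba : b * a = 0)
    (v u : Fin p → ℂ) (hau : aᵀ *ᵥ u = 0) (huv : u ⬝ᵥ v = 0)
    (hva : v ∈ LinearMap.range a.mulVecLin) :
    (Matrix.fromBlocks (Matrix.vecMulVec v u) a b 0).rank = a.rank + b.rank := by
  classical
  obtain ⟨w, hw⟩ := hva
  have key : Matrix.vecMulVec v u = a * Matrix.vecMulVec w u := by
    ext i j
    rw [← hw]
    simp [Matrix.vecMulVec_apply, Matrix.mul_apply, Matrix.mulVecLin_apply,
      Matrix.mulVec, dotProduct, Finset.sum_mul, mul_assoc]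
  have hprod : fromBlocks (0 : Matrix (Fin p) (Fin p) ℂ) a b
        (0 : Matrix (Fin q) (Fin q) ℂ)
      * fromBlocks (1 : Matrix (Fin p) (Fin p) ℂ) 0 (Matrix.vecMulVec w u)
        (1 : Matrix (Fin q) (Fin q) ℂ)
      = fromBlocks (a * Matrix.vecMulVec w u) a b 0 := by
    rw [fromBlocks_multiply]
    simp
  have hdet : IsUnit (fromBlocks (1 : Matrix (Fin p) (Fin p) ℂ) 0
      (Matrix.vecMulVec w u) (1 : Matrix (Fin q) (Fin q) ℂ)).det := by
    rw [det_fromBlocks_zero₁₂]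
    simp
  rw [key, ← hprod, Matrix.rank_mul_eq_left_of_isUnit_det _ _ hdet, rank_antidiag]
end

section
/- Let a ∈ M_{p×q}(ℂ) and b ∈ M_{q×p}(ℂ) with ab = 0 and ba = 0, and let v, u ∈ ℂ^p with uᵀv = 0, aᵀu = 0, bv = 0, and v not in the column space of a. Then rank [[v·uᵀ, a],[b, 0]] = rank a + rank b if u lies in the column space of bᵀ, and rank [[v·uᵀ, a],[b, 0]] = rank a + rank b + 1 otherwise. -/
open Matrix
set_option maxHeartbeats 1000000
set_option synthInstance.maxHeartbeats 400000

namespace Stmt9Aux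

variable {p q : ℕ}

/-- the dot product functional `x ↦ u ⬝ᵥ x` -/
noncomputable def dotL (u : Fin p → ℂ) : (Fin p → ℂ) →ₗ[ℂ] ℂ where
  toFun x := u ⬝ᵥ x
  map_add' x y := by simp [dotProduct_add]
  map_smul' c x := by simp [dotProduct_smul, smul_eq_mul]

@[simp] lemma dotL_apply (u x : Fin p → ℂ) : dotL u x = u ⬝ᵥ x := rfl

/-- inclusion `x ↦ Sum.elim x 0` -/
noncomputable def inl' (p q : ℕ) : (Fin p → ℂ) →ₗ[ℂ] (Fin p ⊕ Fin q → ℂ) where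
  toFun x := Sum.elim x 0
  map_add' x y := by funext i; cases i <;> simp
  map_smul' c x := by funext i; cases i <;> simp

@[simp] lemma inl'_apply (x : Fin p → ℂ) (i) : inl' p q x i = Sum.elim x 0 i := rfl

lemma inl'_injective : Function.Injective (inl' p q) := by
  intro x y h
  funext i
  exact congrFun h (Sum.inl i)

/-- the map `x ↦ ((u ⬝ᵥ x) • v, b *ᵥ x)` -/
noncomputable def L (b : Matrix (Fin q) (Fin p) ℂ) (v u : Fin p → ℂ) :
    (Fin p → ℂ) →ₗ[ℂ] (Fin p ⊕ Fin q → ℂ) where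
  toFun x := Sum.elim ((u ⬝ᵥ x) • v) (b *ᵥ x)
  map_add' x y := by funext i; cases i <;> simp [dotProduct_add, add_smul, mulVec_add]
  map_smul' c x := by
    funext i; cases i <;> simp [dotProduct_smul, smul_eq_mul, mul_smul, mulVec_smul]

@[simp] lemma L_apply (b : Matrix (Fin q) (Fin p) ℂ) (v u x : Fin p → ℂ) (i) :
    L b v u x i = Sum.elim ((u ⬝ᵥ x) • v) (b *ᵥ x) i := rfl

lemma vecMulVec_mulVec (v u x : Fin p → ℂ) :
    vecMulVec v u *ᵥ x = (u ⬝ᵥ x) • v := by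
  funext i
  simp [mulVec, dotProduct, vecMulVec_apply, Finset.mul_sum, mul_comm, mul_left_comm]

/-- duality: if `u` kills the kernel of `b` then `u` is in the range of `bᵀ`. -/
lemma mem_range_transpose (b : Matrix (Fin q) (Fin p) ℂ) (u : Fin p → ℂ)
    (h : ∀ x, b *ᵥ x = 0 → u ⬝ᵥ x = 0) : u ∈ LinearMap.range bᵀ.mulVecLin := by
  set f := b.mulVecLin with hf
  have hker : LinearMap.ker f ≤ LinearMap.ker (dotL u) := by
    intro x hx
    simpa using h x (by simpa [hf] using hx)
  obtain ⟨g, hg⟩ := LinearMap.exists_extend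
    (((LinearMap.ker f).liftQ (dotL u) hker).comp f.quotKerEquivRange.symm.toLinearMap)
  have hgf : ∀ x, g (f x) = u ⬝ᵥ x := by
    intro x
    have h1 : g (f x) = (g.comp (LinearMap.range f).subtype)
        ⟨f x, LinearMap.mem_range_self f x⟩ := rfl
    rw [h1, hg]
    simp [LinearMap.quotKerEquivRange_symm_apply_image, Submodule.liftQ_apply,
      Submodule.mkQ_apply]
  refine ⟨fun j => g (Pi.single j 1), funext fun i => ?_⟩
  have h3 : (b *ᵥ Pi.single i (1:ℂ)) = ∑ j, (b j i) • (Pi.single j 1 : Fin q → ℂ) := by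
    funext k
    simp [Pi.single_apply]
  have h2 : u i = ∑ j, b j i * g (Pi.single j 1) := by
    have h4 := hgf (Pi.single i 1)
    rw [hf, mulVecLin_apply] at h4
    have h5 : u ⬝ᵥ Pi.single i 1 = u i := by simp
    rw [← h5, ← h4, h3, map_sum]
    simp [smul_eq_mul]
  rw [mulVecLin_apply]
  show ∑ j, bᵀ i j * g (Pi.single j 1) = u i
  rw [h2]
  exact Finset.sum_congr rfl fun j _ => by rw [transpose_apply]

end Stmt9Aux

open Stmt9Aux

/-- If `ab = 0`, `ba = 0`, `uᵀ v = 0`, `aᵀ u = 0`, `b v = 0` and `v` is not in the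
column space of `a`, then `rank [[v uᵀ, a], [b, 0]]` equals `rank a + rank b`
when `u` lies in the column space of `bᵀ`, and `rank a + rank b + 1` otherwise. -/
theorem stmt9 (p q : ℕ) (hp : 1 ≤ p) (hq : 1 ≤ q)
    (a : Matrix (Fin p) (Fin q) ℂ) (b : Matrix (Fin q) (Fin p) ℂ)
    (hab : a * b = 0) (hba : b * a = 0)
    (v u : Fin p → ℂ) (huv : u ⬝ᵥ v = 0) (hau : aᵀ *ᵥ u = 0) (hbv : b *ᵥ v = 0)
    (hva : v ∉ LinearMap.range a.mulVecLin) :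
    (u ∈ LinearMap.range bᵀ.mulVecLin →
      (Matrix.fromBlocks (Matrix.vecMulVec v u) a b 0).rank = a.rank + b.rank) ∧
    (u ∉ LinearMap.range bᵀ.mulVecLin →
      (Matrix.fromBlocks (Matrix.vecMulVec v u) a b 0).rank = a.rank + b.rank + 1) := by
  classical
  have hv0 : v ≠ 0 := fun h => hva (h ▸ (LinearMap.range a.mulVecLin).zero_mem)
  -- the block matrix as a coproduct
  have hM : (Matrix.fromBlocks (Matrix.vecMulVec v u) a b 0).mulVecLin
      = ((L b v u).coprod ((inl' p q).comp a.mulVecLin)).comp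
        (LinearEquiv.sumArrowLequivProdArrow (Fin p) (Fin q) ℂ ℂ).toLinearMap := by
    apply LinearMap.ext; intro x
    show (Matrix.fromBlocks (Matrix.vecMulVec v u) a b 0) *ᵥ x = _
    rw [fromBlocks_mulVec]
    funext i
    cases i <;>
      simp [LinearEquiv.sumArrowLequivProdArrow, vecMulVec_mulVec, mulVecLin_apply,
        LinearMap.coprod_apply, Equiv.sumArrowEquivProdArrow]
  have hrange : LinearMap.range (Matrix.fromBlocks (Matrix.vecMulVec v u) a b 0).mulVecLin
      = LinearMap.range (L b v u) ⊔ (LinearMap.range a.mulVecLin).map (inl' p q) := by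
    rw [hM, LinearMap.range_comp, LinearEquiv.range, Submodule.map_top,
      LinearMap.range_coprod, LinearMap.range_comp]
  -- trivial intersection
  have hinf : LinearMap.range (L b v u) ⊓ (LinearMap.range a.mulVecLin).map (inl' p q) = ⊥ := by
    rw [Submodule.eq_bot_iff]
    rintro z ⟨⟨x, hx⟩, ⟨w, ⟨y, hy⟩, hw⟩⟩
    subst hy
    have hz : L b v u x = inl' p q (a.mulVecLin y) := hx.trans hw.symm
    have h1 : (u ⬝ᵥ x) • v = a *ᵥ y := by
      funext i
      simpa using congrFun hz (Sum.inl i)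
    have h2 : b *ᵥ x = 0 := by
      funext j
      simpa using congrFun hz (Sum.inr j)
    have hux : u ⬝ᵥ x = 0 := by
      by_contra hc
      exact hva ⟨(u ⬝ᵥ x)⁻¹ • y, by
        rw [mulVecLin_apply, mulVec_smul, ← h1, smul_smul, inv_mul_cancel₀ hc, one_smul]⟩
    rw [← hx]
    funext i
    cases i with
    | inl i => simp [hux]
    | inr j => simpa using congrFun h2 j
  -- finrank of the image part
  have hA : Module.finrank ℂ ((LinearMap.range a.mulVecLin).map (inl' p q)) = a.rank :=
    ((Submodule.equivMapOfInjective (inl' p q) inl'_injective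
      (LinearMap.range a.mulVecLin)).finrank_eq).symm
  have hrank : (Matrix.fromBlocks (Matrix.vecMulVec v u) a b 0).rank
      = Module.finrank ℂ (LinearMap.range (L b v u)) + a.rank := by
    have := Submodule.finrank_sup_add_finrank_inf_eq (LinearMap.range (L b v u))
      ((LinearMap.range a.mulVecLin).map (inl' p q))
    rw [hinf, finrank_bot, add_zero, hA] at this
    rw [Matrix.rank, hrange, this]
  -- kernel membership for L
  have hkerL : ∀ x, L b v u x = 0 ↔ (u ⬝ᵥ x = 0 ∧ b *ᵥ x = 0) := by
    intro x
    constructor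
    · intro h
      have h1 : (u ⬝ᵥ x) • v = 0 := by
        funext i; simpa using congrFun h (Sum.inl i)
      have h2 : b *ᵥ x = 0 := by
        funext j; simpa using congrFun h (Sum.inr j)
      rcases smul_eq_zero.mp h1 with h | h
      · exact ⟨h, h2⟩
      · exact absurd h hv0
    · rintro ⟨h1, h2⟩
      funext i
      cases i <;> simp [h1, h2]
  have hrnL : Module.finrank ℂ (LinearMap.range (L b v u))
      + Module.finrank ℂ (LinearMap.ker (L b v u)) = p := by
    rw [LinearMap.finrank_range_add_finrank_ker]
    simp
  have hrnb : b.rank + Module.finrank ℂ (LinearMap.ker b.mulVecLin) = p := by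
    rw [Matrix.rank, LinearMap.finrank_range_add_finrank_ker]
    simp
  constructor
  · -- case u ∈ range bᵀ
    rintro ⟨w, hw⟩
    have hker : LinearMap.ker (L b v u) = LinearMap.ker b.mulVecLin := by
      ext x
      rw [LinearMap.mem_ker, LinearMap.mem_ker, hkerL, mulVecLin_apply]
      constructor
      · exact fun h => h.2
      · intro h
        refine ⟨?_, h⟩
        rw [← hw, mulVecLin_apply, mulVec_transpose, ← dotProduct_mulVec, h, dotProduct_zero]
    rw [hker] at hrnL
    have : Module.finrank ℂ (LinearMap.range (L b v u)) = b.rank := by omega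
    rw [hrank, this, add_comm]
  · -- case u ∉ range bᵀ
    intro hu
    obtain ⟨x0, hbx0, hux0⟩ : ∃ x, b *ᵥ x = 0 ∧ u ⬝ᵥ x ≠ 0 := by
      by_contra hc
      push_neg at hc
      exact hu (mem_range_transpose b u hc)
    set K := LinearMap.ker b.mulVecLin with hK
    set ψ : K →ₗ[ℂ] ℂ := (dotL u).comp K.subtype with hψ
    have hx0K : x0 ∈ K := by simpa [hK, mulVecLin_apply] using hbx0
    have hψsurj : LinearMap.range ψ = ⊤ := by
      rw [LinearMap.range_eq_top]
      intro c
      refine ⟨(c * (u ⬝ᵥ x0)⁻¹) • ⟨x0, hx0K⟩, ?_⟩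
      simp [hψ, dotProduct_smul, smul_eq_mul, mul_assoc, inv_mul_cancel₀ hux0]
    have hψrn : 1 + Module.finrank ℂ (LinearMap.ker ψ) = Module.finrank ℂ K := by
      have := ψ.finrank_range_add_finrank_ker
      rwa [hψsurj, finrank_top, Module.finrank_self] at this
    have hkermap : LinearMap.ker (L b v u) = (LinearMap.ker ψ).map K.subtype := by
      ext x
      rw [LinearMap.mem_ker, hkerL]
      constructor
      · rintro ⟨h1, h2⟩
        exact ⟨⟨x, by simpa [hK, mulVecLin_apply] using h2⟩, by simpa [hψ] using h1, rfl⟩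
      · rintro ⟨⟨y, hyK⟩, hy1, rfl⟩
        refine ⟨by simpa [hψ] using hy1, by simpa [hK, mulVecLin_apply] using hyK⟩
    have hkereq : Module.finrank ℂ (LinearMap.ker (L b v u))
        = Module.finrank ℂ (LinearMap.ker ψ) := by
      rw [hkermap]
      exact ((Submodule.equivMapOfInjective K.subtype (Submodule.injective_subtype K)
        (LinearMap.ker ψ)).finrank_eq).symm
    have : Module.finrank ℂ (LinearMap.range (L b v u)) = b.rank + 1 := by omega
    rw [hrank, this]
    ring
end

section
/- Let a ∈ M_{p×q}(ℂ) and b ∈ M_{q×p}(ℂ) with ab = 0 and ba = 0, and let v ∈ ℂ^p with v ≠ 0, bv = 0, and v not in the column space of a. Then there exists u ∈ ℂ^p with aᵀu = 0, uᵀv = 0, and u not in the column space of bᵀ, if and only if rank a + rank b < p − 1. -/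
open Matrix

/-- Let `ab = 0`, `ba = 0`, `v ≠ 0`, `b v = 0` and `v` not in the column space of
`a`.  Then there exists `u` with `aᵀ u = 0`, `uᵀ v = 0` and `u` not in the column
space of `bᵀ` iff `rank a + rank b < p - 1`. -/
theorem stmt10 (p q : ℕ) (hp : 1 ≤ p) (hq : 1 ≤ q)
    (a : Matrix (Fin p) (Fin q) ℂ) (b : Matrix (Fin q) (Fin p) ℂ)
    (hab : a * b = 0) (hba : b * a = 0)
    (v : Fin p → ℂ) (hv : v ≠ 0) (hbv : b *ᵥ v = 0)
    (hva : v ∉ LinearMap.range a.mulVecLin) :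
    (∃ u : Fin p → ℂ, aᵀ *ᵥ u = 0 ∧ u ⬝ᵥ v = 0 ∧
        u ∉ LinearMap.range bᵀ.mulVecLin) ↔
      a.rank + b.rank < p - 1 := by
  classical
  set K : Submodule ℂ (Fin p → ℂ) := LinearMap.ker aᵀ.mulVecLin with hKdef
  set R : Submodule ℂ (Fin p → ℂ) := LinearMap.range bᵀ.mulVecLin with hRdef
  let f : (Fin p → ℂ) →ₗ[ℂ] ℂ :=
    { toFun := fun u => u ⬝ᵥ v
      map_add' := fun x y => add_dotProduct x y v
      map_smul' := fun c x => smul_dotProduct c x v }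
  have hf_apply : ∀ u : Fin p → ℂ, f u = u ⬝ᵥ v := fun _ => rfl
  set W : Submodule ℂ (Fin p → ℂ) := K ⊓ LinearMap.ker f with hWdef
  -- R ≤ W
  have hRW : R ≤ W := by
    rintro u ⟨w, rfl⟩
    rw [Matrix.mulVecLin_apply]
    refine ⟨?_, ?_⟩
    · show bᵀ *ᵥ w ∈ K
      rw [hKdef, LinearMap.mem_ker, Matrix.mulVecLin_apply, Matrix.mulVec_mulVec,
        ← Matrix.transpose_mul, hba, Matrix.transpose_zero, Matrix.zero_mulVec]
    · show bᵀ *ᵥ w ∈ LinearMap.ker f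
      rw [LinearMap.mem_ker, hf_apply, dotProduct_comm, Matrix.dotProduct_mulVec,
        Matrix.vecMul_transpose, hbv, zero_dotProduct]
  -- key: there is u₀ ∈ K with f u₀ ≠ 0
  obtain ⟨u₀, hu₀K, hu₀f⟩ : ∃ u₀, u₀ ∈ K ∧ f u₀ ≠ 0 := by
    set U : Submodule ℂ (Fin p → ℂ) := LinearMap.range a.mulVecLin with hUdef
    have hmkv : (Submodule.mkQ U) v ≠ 0 := by
      rw [Submodule.mkQ_apply, Ne, Submodule.Quotient.mk_eq_zero]
      exact hva
    obtain ⟨φ, hφ⟩ : ∃ φ : Module.Dual ℂ ((Fin p → ℂ) ⧸ U), φ ((Submodule.mkQ U) v) ≠ 0 := by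
      by_contra h
      push_neg at h
      exact hmkv ((Module.forall_dual_apply_eq_zero_iff ℂ _).1 h)
    set g : (Fin p → ℂ) →ₗ[ℂ] ℂ := φ.comp (Submodule.mkQ U) with hgdef
    set u₀ : Fin p → ℂ := fun i => g (Pi.single i 1) with hu₀def
    have hgw : ∀ w : Fin p → ℂ, u₀ ⬝ᵥ w = g w := by
      intro w
      have h1 : g w = ∑ i, w i * u₀ i := by
        conv_lhs => rw [← Finset.univ_sum_single w]
        rw [map_sum]
        refine Finset.sum_congr rfl fun i _ => ?_
        have h2 : (Pi.single i (w i) : Fin p → ℂ) = w i • (Pi.single i 1 : Fin p → ℂ) := by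
          rw [← Pi.single_smul, smul_eq_mul, mul_one]
        rw [h2, _root_.map_smul, smul_eq_mul]
      rw [h1, dotProduct]
      exact Finset.sum_congr rfl fun i _ => mul_comm _ _
    have hgU : ∀ w ∈ U, g w = 0 := by
      intro w hw
      rw [hgdef, LinearMap.comp_apply, Submodule.mkQ_apply,
        (Submodule.Quotient.mk_eq_zero U).2 hw, map_zero]
    refine ⟨u₀, ?_, ?_⟩
    · rw [hKdef, LinearMap.mem_ker, Matrix.mulVecLin_apply]
      funext j
      have h2 : u₀ ⬝ᵥ (a *ᵥ Pi.single j 1) = 0 := by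
        rw [hgw]
        exact hgU _ ⟨Pi.single j 1, rfl⟩
      rw [Matrix.mulVec_single] at h2
      simpa [Matrix.mulVec, dotProduct, Matrix.transpose_apply, mul_comm] using h2
    · rw [hf_apply, hgw]
      exact hφ
  -- dimension computations
  have hKdim : a.rank + Module.finrank ℂ K = p := by
    have h := LinearMap.finrank_range_add_finrank_ker aᵀ.mulVecLin
    rw [Module.finrank_pi, Fintype.card_fin] at h
    rw [show Module.finrank ℂ (LinearMap.range aᵀ.mulVecLin) = aᵀ.rank from rfl,
      Matrix.rank_transpose] at h
    exact h
  have hRdim : Module.finrank ℂ R = b.rank := by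
    rw [hRdef, show Module.finrank ℂ (LinearMap.range bᵀ.mulVecLin) = bᵀ.rank from rfl,
      Matrix.rank_transpose]
  have hWlt : Module.finrank ℂ W < Module.finrank ℂ K := by
    refine Submodule.finrank_lt_finrank_of_lt (SetLike.lt_iff_le_and_exists.2
      ⟨inf_le_left, u₀, hu₀K, fun hmem => hu₀f hmem.2⟩)
  have hWge : Module.finrank ℂ K ≤ Module.finrank ℂ W + 1 := by
    have h := LinearMap.finrank_range_add_finrank_ker (f.domRestrict K)
    have hker : Module.finrank ℂ (LinearMap.ker (f.domRestrict K)) = Module.finrank ℂ W := by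
      rw [LinearMap.ker_domRestrict,
        ← Submodule.finrank_map_subtype_eq K (Submodule.comap K.subtype (LinearMap.ker f)),
        Submodule.map_comap_subtype]
    have hrange : Module.finrank ℂ (LinearMap.range (f.domRestrict K)) ≤ 1 := by
      have h2 := Submodule.finrank_le (LinearMap.range (f.domRestrict K))
      simpa using h2
    omega
  constructor
  · rintro ⟨u, hau, huv, hub⟩
    have huW : u ∈ W := by
      refine Submodule.mem_inf.2 ⟨?_, ?_⟩
      · rw [hKdef, LinearMap.mem_ker, Matrix.mulVecLin_apply]; exact hau
      · rw [LinearMap.mem_ker, hf_apply]; exact huv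
    have hlt : Module.finrank ℂ R < Module.finrank ℂ W :=
      Submodule.finrank_lt_finrank_of_lt (SetLike.lt_iff_le_and_exists.2 ⟨hRW, u, huW, hub⟩)
    omega
  · intro h
    have hlt : Module.finrank ℂ R < Module.finrank ℂ W := by omega
    obtain ⟨u, huW, huR⟩ := SetLike.exists_of_lt
      (lt_of_le_of_ne hRW (fun he => by rw [he] at hlt; exact lt_irrefl _ hlt))
    obtain ⟨huK, huf⟩ := Submodule.mem_inf.1 huW
    rw [hKdef, LinearMap.mem_ker, Matrix.mulVecLin_apply] at huK
    rw [LinearMap.mem_ker, hf_apply] at huf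
    exact ⟨u, huK, huf, huR⟩
end

section
/- Let V be an n-dimensional complex vector space, let x be an endomorphism of V, and let k be an integer with 0 ≤ k ≤ n. Then there exists a k-dimensional subspace W ⊆ V with range x ⊆ W ⊆ ker x if and only if x ∘ x = 0 and rank x ≤ min{k, n − k}. -/
open Module Submodule

lemma aux12 {V : Type} [AddCommGroup V] [Module ℂ V] [FiniteDimensional ℂ V]
    (d : ℕ) : ∀ (p q : Submodule ℂ V), p ≤ q →
      Module.finrank ℂ p + d ≤ Module.finrank ℂ q →
      ∃ W : Submodule ℂ V, Module.finrank ℂ W = Module.finrank ℂ p + d ∧ p ≤ W ∧ W ≤ q := by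
  induction d with
  | zero => intro p q hpq _; exact ⟨p, by simp, le_rfl, hpq⟩
  | succ d ih =>
    intro p q hpq hle
    have hlt : Module.finrank ℂ p < Module.finrank ℂ q := by omega
    have : ¬ q ≤ p := fun h => absurd (Submodule.finrank_mono h) (by omega)
    obtain ⟨v, hvq, hvp⟩ := Set.not_subset.mp this
    have hv0 : v ≠ 0 := fun h => hvp (h ▸ p.zero_mem)
    set p' := p ⊔ (ℂ ∙ v) with hp'
    have hdisj : p ⊓ (ℂ ∙ v) = ⊥ := by
      exact (Submodule.disjoint_span_singleton' hv0).mpr hvp |>.eq_bot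
    have hfr : Module.finrank ℂ p' = Module.finrank ℂ p + 1 := by
      rw [hp']
      have := Submodule.finrank_sup_add_finrank_inf_eq p (ℂ ∙ v)
      rw [hdisj, finrank_bot, finrank_span_singleton hv0] at this
      omega
    have hp'q : p' ≤ q := sup_le hpq ((Submodule.span_singleton_le_iff_mem v q).mpr hvq)
    obtain ⟨W, hW, hpW, hWq⟩ := ih p' q hp'q (by omega)
    exact ⟨W, by omega, le_trans le_sup_left hpW, hWq⟩

/-- There exists a `k`-dimensional subspace `W` with `range x ⊆ W ⊆ ker x` iff
`x ∘ x = 0` and `rank x ≤ min k (n - k)`. -/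
theorem stmt12 (n k : ℕ) (hk : k ≤ n) (V : Type) [AddCommGroup V] [Module ℂ V]
    [FiniteDimensional ℂ V] (hn : Module.finrank ℂ V = n)
    (x : V →ₗ[ℂ] V) :
    (∃ W : Submodule ℂ V, Module.finrank ℂ W = k ∧
        LinearMap.range x ≤ W ∧ W ≤ LinearMap.ker x) ↔
      (x ∘ₗ x = 0 ∧
        Module.finrank ℂ (LinearMap.range x) ≤ min k (n - k)) := by
  have hrk := LinearMap.finrank_range_add_finrank_ker x
  rw [hn] at hrk
  constructor
  · rintro ⟨W, hWk, hrW, hWker⟩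
    have hrker : LinearMap.range x ≤ LinearMap.ker x := le_trans hrW hWker
    constructor
    · ext v
      simpa using hrker (LinearMap.mem_range_self x v)
    · have h1 : Module.finrank ℂ (LinearMap.range x) ≤ k :=
        hWk ▸ Submodule.finrank_mono hrW
      have h2 : k ≤ Module.finrank ℂ (LinearMap.ker x) :=
        hWk ▸ Submodule.finrank_mono hWker
      omega
  · rintro ⟨hxx, hrank⟩
    have hrker : LinearMap.range x ≤ LinearMap.ker x := by
      rintro _ ⟨v, rfl⟩
      simpa using LinearMap.ext_iff.mp hxx v
    have h1 : Module.finrank ℂ (LinearMap.range x) ≤ k := le_trans hrank (min_le_left _ _)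
    have h2 : k ≤ Module.finrank ℂ (LinearMap.ker x) := by
      have := le_trans hrank (min_le_right _ _); omega
    obtain ⟨W, hW, hrW, hWker⟩ := aux12 (k - Module.finrank ℂ (LinearMap.range x))
      (LinearMap.range x) (LinearMap.ker x) hrker (by omega)
    exact ⟨W, by omega, hrW, hWker⟩
end

section
/- Let k be an integer with 0 ≤ k ≤ n. Let x ∈ M_n(ℂ), let W ⊆ ℂ^n be a k-dimensional subspace with the column space of x contained in W and W contained in the kernel of x, and let L ⊆ V₁ be a one-dimensional subspace with the column space of x^θ contained in L and L contained in the kernel of x^θ. Then (x^{−θ})² = 0 and rank x^{−θ} ≤ min{k, n − k}. -/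
open Matrix

/-- Auxiliary: extend-by-zero embedding of `ℂ^p` into `ℂ^p × ℂ^q`. -/
noncomputable def embL (p q : ℕ) : (Fin p → ℂ) →ₗ[ℂ] ((Fin p ⊕ Fin q) → ℂ) where
  toFun w := Sum.elim w 0
  map_add' u v := by ext (i | i) <;> simp
  map_smul' c v := by ext (i | i) <;> simp

lemma embL_injective (p q : ℕ) : Function.Injective (embL p q) := by
  intro u v h
  ext i
  exact congrFun h (Sum.inl i)

lemma rank_add_le' {n m : Type*} [Fintype n] [Fintype m] (M N : Matrix n m ℂ) :
    (M + N).rank ≤ M.rank + N.rank := by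
  classical
  have h : LinearMap.range (M + N).mulVecLin ≤
      LinearMap.range M.mulVecLin ⊔ LinearMap.range N.mulVecLin := by
    rintro _ ⟨v, rfl⟩
    rw [Matrix.mulVecLin_add, LinearMap.add_apply]
    exact Submodule.add_mem_sup ⟨v, rfl⟩ ⟨v, rfl⟩
  calc (M + N).rank
      ≤ Module.finrank ℂ ↥(LinearMap.range M.mulVecLin ⊔ LinearMap.range N.mulVecLin) :=
        Submodule.finrank_mono h
    _ ≤ M.rank + N.rank :=
        Nat.le.intro (Submodule.finrank_sup_add_finrank_inf_eq _ _)

lemma rank_blockB {p q : ℕ} (B : Matrix (Fin p) (Fin q) ℂ) :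
    (Matrix.fromBlocks (0 : Matrix (Fin p) (Fin p) ℂ) B 0
      (0 : Matrix (Fin q) (Fin q) ℂ)).rank ≤ B.rank := by
  have h : Matrix.fromBlocks (0 : Matrix (Fin p) (Fin p) ℂ) B 0
      (0 : Matrix (Fin q) (Fin q) ℂ)
      = Matrix.fromRows (1 : Matrix (Fin p) (Fin p) ℂ) (0 : Matrix (Fin q) (Fin p) ℂ) *
        (B * Matrix.fromCols (0 : Matrix (Fin q) (Fin p) ℂ)
          (1 : Matrix (Fin q) (Fin q) ℂ)) := by
    rw [mul_fromCols, fromRows_mul_fromCols]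
    simp
  rw [h]
  exact (rank_mul_le_right _ _).trans (rank_mul_le_left _ _)

lemma rank_blockC {p q : ℕ} (C : Matrix (Fin q) (Fin p) ℂ) :
    (Matrix.fromBlocks (0 : Matrix (Fin p) (Fin p) ℂ) 0 C
      (0 : Matrix (Fin q) (Fin q) ℂ)).rank ≤ C.rank := by
  have h : Matrix.fromBlocks (0 : Matrix (Fin p) (Fin p) ℂ) 0 C
      (0 : Matrix (Fin q) (Fin q) ℂ)
      = Matrix.fromRows (0 : Matrix (Fin p) (Fin q) ℂ) (1 : Matrix (Fin q) (Fin q) ℂ) *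
        (C * Matrix.fromCols (1 : Matrix (Fin p) (Fin p) ℂ)
          (0 : Matrix (Fin p) (Fin q) ℂ)) := by
    rw [mul_fromCols, fromRows_mul_fromCols]
    simp
  rw [h]
  exact (rank_mul_le_right _ _).trans (rank_mul_le_left _ _)

lemma mul_eq_zero_of_range_le_ker {n : Type*} [Fintype n] [DecidableEq n]
    {M N : Matrix n n ℂ} {S : Submodule ℂ (n → ℂ)}
    (h1 : LinearMap.range N.mulVecLin ≤ S) (h2 : S ≤ LinearMap.ker M.mulVecLin) :
    M * N = 0 := by
  ext i j
  have hmem : M.mulVecLin (N.mulVecLin (Pi.single j 1)) = 0 :=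
    h2 (h1 ⟨Pi.single j 1, rfl⟩)
  have h0 : (M * N) *ᵥ Pi.single j 1 = 0 := by
    rw [← mulVec_mulVec]
    simpa using hmem
  simpa using congrFun h0 i

/-- If the `(2,2)` block of `x` vanishes, then `rank B + rank C ≤ rank x`. -/
lemma rank_blocks_le_rank {p q : ℕ} (x : Matrix (Fin p ⊕ Fin q) (Fin p ⊕ Fin q) ℂ)
    (hD : x.toBlocks₂₂ = 0) :
    x.toBlocks₁₂.rank + x.toBlocks₂₁.rank ≤ x.rank := by
  classical
  set A := x.toBlocks₁₁ with hA
  set B := x.toBlocks₁₂ with hB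
  set C := x.toBlocks₂₁ with hC
  have hx : x = Matrix.fromBlocks A B C 0 := by
    rw [← hD]; exact (fromBlocks_toBlocks x).symm
  set π : ((Fin p ⊕ Fin q) → ℂ) →ₗ[ℂ] (Fin q → ℂ) :=
    LinearMap.funLeft ℂ ℂ (Sum.inr : Fin q → Fin p ⊕ Fin q) with hπ
  set R := LinearMap.range x.mulVecLin with hR
  set φ : R →ₗ[ℂ] (Fin q → ℂ) := π.comp R.subtype with hφ
  have hφrange : LinearMap.range φ = LinearMap.range C.mulVecLin := by
    rw [hφ, LinearMap.range_comp, Submodule.range_subtype]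
    ext w
    constructor
    · rintro ⟨y, ⟨v, rfl⟩, rfl⟩
      refine ⟨v ∘ Sum.inl, ?_⟩
      show C *ᵥ (v ∘ Sum.inl) = (x *ᵥ v) ∘ Sum.inr
      rw [hx, fromBlocks_mulVec]
      simp
    · rintro ⟨u, rfl⟩
      refine Submodule.mem_map.2 ⟨x *ᵥ Sum.elim u 0, ⟨Sum.elim u 0, rfl⟩, ?_⟩
      show (x *ᵥ Sum.elim u 0) ∘ Sum.inr = C *ᵥ u
      rw [hx, fromBlocks_mulVec]
      simp
  have hincl : Submodule.map (embL p q) (LinearMap.range B.mulVecLin)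
      ≤ R ⊓ LinearMap.ker π := by
    rintro _ ⟨_, ⟨u, rfl⟩, rfl⟩
    constructor
    · refine ⟨Sum.elim 0 u, ?_⟩
      show x *ᵥ Sum.elim 0 u = embL p q (B *ᵥ u)
      rw [hx, fromBlocks_mulVec]
      show _ = Sum.elim (B *ᵥ u) 0
      simp
    · show π (embL p q (B *ᵥ u)) = 0
      show (Sum.elim (B *ᵥ u) (0 : Fin q → ℂ)) ∘ Sum.inr = 0
      simp
  have hkerB : B.rank ≤ Module.finrank ℂ (LinearMap.ker φ) := by
    have e : Module.finrank ℂ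
        ↥(Submodule.map (embL p q) (LinearMap.range B.mulVecLin)) = B.rank :=
      ((Submodule.equivMapOfInjective _ (embL_injective p q)
        (LinearMap.range B.mulVecLin)).finrank_eq).symm
    have e2 : Module.finrank ℂ (LinearMap.ker φ)
        = Module.finrank ℂ ↥(R ⊓ LinearMap.ker π) := by
      have hmap : Submodule.map R.subtype (LinearMap.ker φ) = R ⊓ LinearMap.ker π := by
        rw [hφ, LinearMap.ker_comp, Submodule.map_comap_subtype]
      rw [← hmap, Submodule.finrank_map_subtype_eq]
    rw [← e, e2]
    exact Submodule.finrank_mono hincl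
  have hrn : Module.finrank ℂ (LinearMap.range φ) + Module.finrank ℂ (LinearMap.ker φ)
      = Module.finrank ℂ R := LinearMap.finrank_range_add_finrank_ker φ
  have hCrank : C.rank = Module.finrank ℂ (LinearMap.range φ) := by
    rw [hφrange]; rfl
  have hxrank : x.rank = Module.finrank ℂ R := rfl
  omega

/-- If `Im x ⊆ W ⊆ ker x` for a `k`-dimensional subspace `W`, and
`Im x^θ ⊆ L ⊆ ker x^θ` for a line `L ⊆ V₁`, then `(x^{-θ})² = 0` and
`rank x^{-θ} ≤ min k (n - k)`. -/
theorem stmt13 (p q : ℕ) (hp : 1 ≤ p) (hq : 1 ≤ q) (k : ℕ) (hk : k ≤ p + q)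
    (x : Matrix (Fin p ⊕ Fin q) (Fin p ⊕ Fin q) ℂ)
    (W : Submodule ℂ ((Fin p ⊕ Fin q) → ℂ))
    (hW : Module.finrank ℂ W = k)
    (hxW : LinearMap.range x.mulVecLin ≤ W)
    (hWx : W ≤ LinearMap.ker x.mulVecLin)
    (L : Submodule ℂ ((Fin p ⊕ Fin q) → ℂ))
    (hL : Module.finrank ℂ L = 1) (hLV1 : L ≤ V1 p q)
    (hrange : LinearMap.range (xTheta x).mulVecLin ≤ L)
    (hker : L ≤ LinearMap.ker (xTheta x).mulVecLin) :
    (xMTheta x) ^ 2 = 0 ∧ (xMTheta x).rank ≤ min k (p + q - k) := by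
  classical
  set A := x.toBlocks₁₁ with hA
  set B := x.toBlocks₁₂ with hB
  set C := x.toBlocks₂₁ with hC
  -- the (2,2) block of x vanishes
  have hD : x.toBlocks₂₂ = 0 := by
    ext i j
    have hmem : (xTheta x).mulVecLin (Pi.single (Sum.inr j) 1) ∈ V1 p q :=
      hLV1 (hrange ⟨Pi.single (Sum.inr j) 1, rfl⟩)
    have h0 : ((xTheta x) *ᵥ Pi.single (Sum.inr j) 1) ∘ Sum.inr = 0 := hmem
    have := congrFun h0 i
    show x (Sum.inr i) (Sum.inr j) = 0
    simpa [xTheta, Matrix.toBlocks₂₂] using this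
  have hx : x = Matrix.fromBlocks A B C 0 := by
    rw [← hD]; exact (fromBlocks_toBlocks x).symm
  -- x² = 0 and (x^θ)² = 0
  have hx2 : x * x = 0 := mul_eq_zero_of_range_le_ker hxW hWx
  have hθ2 : xTheta x * xTheta x = 0 := mul_eq_zero_of_range_le_ker hrange hker
  have hAA : A * A = 0 := by
    rw [xTheta, fromBlocks_multiply] at hθ2
    ext i j
    have := congrFun (congrFun hθ2 (Sum.inl i)) (Sum.inl j)
    simpa using this
  rw [hx, fromBlocks_multiply] at hx2
  have hBC : B * C = 0 := by
    ext i j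
    have := congrFun (congrFun hx2 (Sum.inl i)) (Sum.inl j)
    simp only [Matrix.fromBlocks_apply₁₁, Matrix.add_apply, Matrix.zero_apply] at this ⊢
    have h2 := congrFun (congrFun hAA i) j
    simp only [Matrix.zero_apply] at h2
    linear_combination this - h2
  have hCB : C * B = 0 := by
    ext i j
    have := congrFun (congrFun hx2 (Sum.inr i)) (Sum.inr j)
    simpa using this
  -- first conclusion
  have hsq : (xMTheta x) ^ 2 = 0 := by
    rw [pow_two, xMTheta, fromBlocks_multiply]
    simp [← hB, ← hC, hBC, hCB]
  refine ⟨hsq, ?_⟩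
  -- rank bound
  have hsplit : xMTheta x = Matrix.fromBlocks 0 B 0 0 + Matrix.fromBlocks 0 0 C 0 := by
    rw [xMTheta, Matrix.fromBlocks_add]
    simp [← hB, ← hC]
  have h1 : (xMTheta x).rank ≤ B.rank + C.rank := by
    rw [hsplit]
    exact (rank_add_le' _ _).trans (add_le_add (rank_blockB _) (rank_blockC _))
  have h2 : B.rank + C.rank ≤ x.rank := rank_blocks_le_rank x hD
  have hxrank : x.rank = Module.finrank ℂ (LinearMap.range x.mulVecLin) := rfl
  have hxk : x.rank ≤ k := by
    rw [hxrank, ← hW]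
    exact Submodule.finrank_mono hxW
  have hdim : Module.finrank ℂ ((Fin p ⊕ Fin q) → ℂ) = p + q := by
    simp [Module.finrank_pi]
  have hrn : Module.finrank ℂ (LinearMap.range x.mulVecLin)
      + Module.finrank ℂ (LinearMap.ker x.mulVecLin) = p + q := by
    rw [LinearMap.finrank_range_add_finrank_ker x.mulVecLin, hdim]
  have hkerge : k ≤ Module.finrank ℂ (LinearMap.ker x.mulVecLin) := by
    rw [← hW]
    exact Submodule.finrank_mono hWx
  have hxk2 : x.rank ≤ p + q - k := by omega
  exact le_min (by omega) (by omega)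
end

section
/- Let k be an integer with 0 ≤ k ≤ n. For every one-dimensional subspace L ⊆ V₁ and every matrix z ∈ M_n(ℂ) of the form z = [[0, a],[b, 0]] with z² = 0 and rank z ≤ min{k, n − k}, there exist a k-dimensional subspace W ⊆ ℂ^n and a matrix x ∈ M_n(ℂ) such that the column space of x is contained in W, W is contained in the kernel of x, the column space of x^θ is contained in L, L is contained in the kernel of x^θ, and x^{−θ} = z. -/
open Matrix

/-- An intermediate subspace of any dimension between `finrank A` and `finrank B`
exists whenever `A ≤ B`. -/
lemma exists_between_finrank {K V : Type*} [Field K] [AddCommGroup V] [Module K V]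
    (A B : Submodule K V) [FiniteDimensional K B] (hAB : A ≤ B) (k : ℕ)
    (h1 : Module.finrank K A ≤ k) (h2 : k ≤ Module.finrank K B) :
    ∃ W : Submodule K V, A ≤ W ∧ W ≤ B ∧ Module.finrank K W = k := by
  have : FiniteDimensional K A := Submodule.finiteDimensional_of_le hAB
  obtain ⟨d, hd⟩ : ∃ d, k - Module.finrank K A = d := ⟨_, rfl⟩
  induction d generalizing A with
  | zero =>
      have : Module.finrank K A = k := by omega
      exact ⟨A, le_refl _, hAB, this⟩
  | succ d ih =>
      have hlt : Module.finrank K A < k := by omega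
      have hAB' : A < B := by
        rcases lt_or_eq_of_le hAB with h | h
        · exact h
        · exfalso; rw [h] at hlt; omega
      obtain ⟨v, hvB, hvA⟩ := SetLike.exists_of_lt hAB'
      set A' := A ⊔ K ∙ v with hA'
      have hA'B : A' ≤ B := sup_le hAB'.le
        ((Submodule.span_singleton_le_iff_mem v B).2 hvB)
      have : FiniteDimensional K A' := Submodule.finiteDimensional_of_le hA'B
      have hinf : A ⊓ (K ∙ v) = ⊥ := by
        rw [Submodule.eq_bot_iff]
        intro x ⟨hxA, hxs⟩
        obtain ⟨c, rfl⟩ := Submodule.mem_span_singleton.1 hxs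
        by_contra hx
        have hc : c ≠ 0 := by rintro rfl; simp at hx
        exact hvA (by simpa [hc] using A.smul_mem c⁻¹ hxA)
      have hv0 : v ≠ 0 := by rintro rfl; exact hvA A.zero_mem
      have hdim : Module.finrank K A' = Module.finrank K A + 1 := by
        have := Submodule.finrank_sup_add_finrank_inf_eq A (K ∙ v)
        rw [hinf, finrank_bot, finrank_span_singleton hv0] at this
        rw [hA']
        omega
      have h1' : Module.finrank K A' ≤ k := by omega
      have hd' : k - Module.finrank K A' = d := by omega
      obtain ⟨W, hAW, hWB, hW⟩ := ih A' hA'B h1' inferInstance hd'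
      exact ⟨W, le_sup_left.trans hAW, hWB, hW⟩

/-- For every line `L ⊆ V₁` and every `z = [[0, a], [b, 0]]` with `z² = 0` and
`rank z ≤ min k (n - k)`, there are a `k`-dimensional subspace `W ⊆ ℂ^n` and
`x ∈ M_n(ℂ)` with `Im x ⊆ W ⊆ ker x`, `Im x^θ ⊆ L ⊆ ker x^θ` and `x^{-θ} = z`. -/
theorem stmt14 (p q : ℕ) (hp : 1 ≤ p) (hq : 1 ≤ q) (k : ℕ) (hk : k ≤ p + q)
    (L : Submodule ℂ ((Fin p ⊕ Fin q) → ℂ))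
    (hL : Module.finrank ℂ L = 1) (hLV1 : L ≤ V1 p q)
    (a : Matrix (Fin p) (Fin q) ℂ) (b : Matrix (Fin q) (Fin p) ℂ)
    (hz2 : (Matrix.fromBlocks 0 a b 0) ^ 2 = 0)
    (hzr : (Matrix.fromBlocks 0 a b 0).rank ≤ min k (p + q - k)) :
    ∃ (W : Submodule ℂ ((Fin p ⊕ Fin q) → ℂ))
      (x : Matrix (Fin p ⊕ Fin q) (Fin p ⊕ Fin q) ℂ),
      Module.finrank ℂ W = k ∧
      LinearMap.range x.mulVecLin ≤ W ∧ W ≤ LinearMap.ker x.mulVecLin ∧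
      LinearMap.range (xTheta x).mulVecLin ≤ L ∧
      L ≤ LinearMap.ker (xTheta x).mulVecLin ∧
      xMTheta x = Matrix.fromBlocks 0 a b 0 := by
  set z := Matrix.fromBlocks 0 a b 0 with hz
  -- take x = z (its θ-part is zero)
  have hrange_ker : LinearMap.range z.mulVecLin ≤ LinearMap.ker z.mulVecLin := by
    rintro _ ⟨v, rfl⟩
    have : (z * z).mulVecLin v = 0 := by
      rw [show z * z = 0 by rw [← sq]; exact hz2]; simp
    simpa [Matrix.mulVecLin_mul] using this
  have hrank : z.rank = Module.finrank ℂ (LinearMap.range z.mulVecLin) := rfl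
  have hkerdim : Module.finrank ℂ (LinearMap.ker z.mulVecLin) = (p + q) - z.rank := by
    have := LinearMap.finrank_range_add_finrank_ker z.mulVecLin
    rw [Module.finrank_fintype_fun_eq_card] at this
    simp only [Fintype.card_sum, Fintype.card_fin] at this
    omega
  have hzk : z.rank ≤ k := hzr.trans (min_le_left _ _)
  have hzk' : z.rank ≤ (p + q) - k := hzr.trans (min_le_right _ _)
  have hkk : k ≤ Module.finrank ℂ (LinearMap.ker z.mulVecLin) := by
    rw [hkerdim]; omega
  obtain ⟨W, hW1, hW2, hW3⟩ := exists_between_finrank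
    (LinearMap.range z.mulVecLin) (LinearMap.ker z.mulVecLin)
    hrange_ker k (by rw [← hrank]; exact hzk) hkk
  refine ⟨W, z, hW3, hW1, hW2, ?_, ?_, ?_⟩
  · have : xTheta z = 0 := by
      ext (i | i) (j | j) <;>
        simp [xTheta, hz, Matrix.toBlocks₁₁, Matrix.toBlocks₂₂, Matrix.fromBlocks]
    rw [this]
    simp
  · have : xTheta z = 0 := by
      ext (i | i) (j | j) <;>
        simp [xTheta, hz, Matrix.toBlocks₁₁, Matrix.toBlocks₂₂, Matrix.fromBlocks]
    rw [this]
    simp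
  · ext (i | i) (j | j) <;>
      simp [xMTheta, hz, Matrix.toBlocks₁₂, Matrix.toBlocks₂₁, Matrix.fromBlocks]
end

section
/- Let a, a' ∈ M_{p×q}(ℂ) and b, b' ∈ M_{q×p}(ℂ) satisfy ab = 0, ba = 0, a'b' = 0, and b'a' = 0. Then there exist invertible matrices g₁ ∈ GL_p(ℂ) and g₂ ∈ GL_q(ℂ) with a' = g₁ a g₂⁻¹ and b' = g₂ b g₁⁻¹ if and only if rank a = rank a' and rank b = rank b'. -/
open Matrix
open LinearMap Submodule Module

noncomputable def canonA (p q r : ℕ) : Matrix (Fin p) (Fin q) ℂ :=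
  Matrix.of fun i j => if (i : ℕ) = (j : ℕ) ∧ (i : ℕ) < r then 1 else 0

noncomputable def canonB (p q r s : ℕ) : Matrix (Fin q) (Fin p) ℂ :=
  Matrix.of fun i j => if (i : ℕ) = (j : ℕ) ∧ r ≤ (i : ℕ) ∧ (i : ℕ) < r + s then 1 else 0

noncomputable def myEquiv (r s d1 p : ℕ) (hpe : r + (s + d1) = p) :
    ((Fin r ⊕ Fin d1) ⊕ Fin s) ≃ Fin p :=
  (Equiv.sumAssoc _ _ _).trans ((Equiv.sumCongr (Equiv.refl (Fin r)) (Equiv.sumComm _ _)).trans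
    ((Equiv.sumCongr (Equiv.refl (Fin r)) finSumFinEquiv).trans
      (finSumFinEquiv.trans (finCongr hpe))))

noncomputable def myEquiv' (r s d2 q : ℕ) (hqe : r + (s + d2) = q) :
    ((Fin s ⊕ Fin d2) ⊕ Fin r) ≃ Fin q :=
  (Equiv.sumComm _ _).trans ((Equiv.sumCongr (Equiv.refl (Fin r)) finSumFinEquiv).trans
    (finSumFinEquiv.trans (finCongr hqe)))

theorem auxLI {m n r s d1 : ℕ}
    (f : (Fin n → ℂ) →ₗ[ℂ] (Fin m → ℂ)) (g : (Fin m → ℂ) →ₗ[ℂ] (Fin n → ℂ))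
    (D : Submodule ℂ (Fin m → ℂ))
    (hsupD : LinearMap.range f ⊔ D = LinearMap.ker g)
    (hdisD : Disjoint (LinearMap.range f) D)
    (vb : Basis (Fin r) ℂ (LinearMap.range f))
    (wb : Basis (Fin s) ℂ (LinearMap.range g))
    (db : Basis (Fin d1) ℂ D)
    (e : Fin s → (Fin m → ℂ)) (he : ∀ j, g (e j) = (wb j : Fin n → ℂ)) :
    LinearIndependent ℂ
      (Sum.elim (Sum.elim (fun i => (vb i : Fin m → ℂ)) (fun k => (db k : Fin m → ℂ))) e) := by
  have li_vb : LinearIndependent ℂ (fun i => (vb i : Fin m → ℂ)) :=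
    vb.linearIndependent.map' (LinearMap.range f).subtype (Submodule.ker_subtype _)
  have li_db : LinearIndependent ℂ (fun k => (db k : Fin m → ℂ)) :=
    db.linearIndependent.map' D.subtype (Submodule.ker_subtype _)
  have hspan_vb : Submodule.span ℂ (Set.range fun i => (vb i : Fin m → ℂ)) = LinearMap.range f := by
    have : (Set.range fun i => (vb i : Fin m → ℂ)) = (LinearMap.range f).subtype '' Set.range vb := by
      rw [← Set.range_comp]; rfl
    rw [this, Submodule.span_image, vb.span_eq, Submodule.map_top, Submodule.range_subtype]
  have hspan_db : Submodule.span ℂ (Set.range fun k => (db k : Fin m → ℂ)) ≤ D := by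
    rw [Submodule.span_le]; rintro x ⟨k, rfl⟩; exact (db k).2
  have li_inner : LinearIndependent ℂ
      (Sum.elim (fun i => (vb i : Fin m → ℂ)) (fun k => (db k : Fin m → ℂ))) :=
    li_vb.sum_type li_db (by rw [hspan_vb]; exact hdisD.mono_right hspan_db)
  refine li_inner.sum_type ?_ ?_
  · rw [Fintype.linearIndependent_iff]
    intro c hc j
    have h2 : g (∑ i, c i • e i) = 0 := by rw [hc, map_zero]
    rw [map_sum] at h2
    simp only [LinearMap.map_smul, he] at h2
    have h3 : ((∑ i, c i • wb i : LinearMap.range g) : Fin n → ℂ) = 0 := by push_cast; exact h2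
    rw [Submodule.coe_eq_zero] at h3
    exact Fintype.linearIndependent_iff.mp wb.linearIndependent c h3 j
  · have h1 : Submodule.span ℂ (Set.range (Sum.elim (fun i => (vb i : Fin m → ℂ))
        (fun k => (db k : Fin m → ℂ)))) ≤ LinearMap.ker g := by
      rw [Set.Sum.elim_range, Submodule.span_union, hspan_vb, ← hsupD]
      exact sup_le_sup le_rfl hspan_db
    refine Disjoint.mono_left h1 ?_
    rw [disjoint_def]
    intro x hxk hxe
    rw [mem_span_range_iff_exists_fun ℂ] at hxe
    obtain ⟨c, rfl⟩ := hxe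
    have h2 : g (∑ i, c i • e i) = 0 := hxk
    rw [map_sum] at h2
    simp only [LinearMap.map_smul, he] at h2
    have h3 : ((∑ i, c i • wb i : LinearMap.range g) : Fin n → ℂ) = 0 := by push_cast; exact h2
    rw [Submodule.coe_eq_zero] at h3
    have hc : ∀ j, c j = 0 := Fintype.linearIndependent_iff.mp wb.linearIndependent c h3
    simp [hc]

set_option maxHeartbeats 1000000 in
theorem key_s15 (p q : ℕ) (hp : 1 ≤ p) (hq : 1 ≤ q)
    (a : Matrix (Fin p) (Fin q) ℂ) (b : Matrix (Fin q) (Fin p) ℂ)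
    (hab : a * b = 0) (hba : b * a = 0) :
    ∃ (g₁ : (Matrix (Fin p) (Fin p) ℂ)ˣ) (g₂ : (Matrix (Fin q) (Fin q) ℂ)ˣ),
      a = (g₁ : Matrix (Fin p) (Fin p) ℂ) * canonA p q a.rank * ((g₂⁻¹ : _) : Matrix (Fin q) (Fin q) ℂ) ∧
      b = (g₂ : Matrix (Fin q) (Fin q) ℂ) * canonB p q a.rank b.rank * ((g₁⁻¹ : _) : Matrix (Fin p) (Fin p) ℂ) := by
  set f := a.mulVecLin with hf
  set g := b.mulVecLin with hg
  have hgf : LinearMap.range f ≤ LinearMap.ker g := by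
    rw [LinearMap.range_le_ker_iff, ← Matrix.mulVecLin_mul, hba, Matrix.mulVecLin_zero]
  have hfg : LinearMap.range g ≤ LinearMap.ker f := by
    rw [LinearMap.range_le_ker_iff, ← Matrix.mulVecLin_mul, hab, Matrix.mulVecLin_zero]
  set r := a.rank with hrdef
  set s := b.rank with hsdef
  have hr : finrank ℂ (LinearMap.range f) = r := rfl
  have hs : finrank ℂ (LinearMap.range g) = s := rfl
  have hfrp : finrank ℂ (Fin p → ℂ) = p := by simp
  have hfrq : finrank ℂ (Fin q → ℂ) = q := by simp
  have hkerg : finrank ℂ (LinearMap.ker g) = p - s := by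
    have := LinearMap.finrank_range_add_finrank_ker g
    rw [hfrp] at this; omega
  have hkerf : finrank ℂ (LinearMap.ker f) = q - r := by
    have := LinearMap.finrank_range_add_finrank_ker f
    rw [hfrq] at this; omega
  have hrsp : r + s ≤ p := by
    have h1 : finrank ℂ (LinearMap.range f) ≤ finrank ℂ (LinearMap.ker g) :=
      Submodule.finrank_mono hgf
    rw [hr, hkerg] at h1
    have h2 : s ≤ p := by
      have := LinearMap.finrank_range_add_finrank_ker g
      rw [hfrp] at this; omega
    omega
  have hrsq : r + s ≤ q := by
    have h1 : finrank ℂ (LinearMap.range g) ≤ finrank ℂ (LinearMap.ker f) :=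
      Submodule.finrank_mono hfg
    rw [hs, hkerf] at h1
    have h2 : r ≤ q := by
      have := LinearMap.finrank_range_add_finrank_ker f
      rw [hfrq] at this; omega
    omega
  set d1 := p - (r + s) with hd1def
  set d2 := q - (r + s) with hd2def
  obtain ⟨C, hC⟩ := Submodule.exists_isCompl (LinearMap.range f)
  obtain ⟨C', hC'⟩ := Submodule.exists_isCompl (LinearMap.range g)
  set D : Submodule ℂ (Fin p → ℂ) := C ⊓ LinearMap.ker g with hDdef
  set D' : Submodule ℂ (Fin q → ℂ) := C' ⊓ LinearMap.ker f with hD'def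
  have hDg : D ≤ LinearMap.ker g := inf_le_right
  have hD'f : D' ≤ LinearMap.ker f := inf_le_right
  have hsupD : LinearMap.range f ⊔ D = LinearMap.ker g := by
    rw [hDdef, ← sup_inf_assoc_of_le _ hgf, hC.sup_eq_top, top_inf_eq]
  have hsupD' : LinearMap.range g ⊔ D' = LinearMap.ker f := by
    rw [hD'def, ← sup_inf_assoc_of_le _ hfg, hC'.sup_eq_top, top_inf_eq]
  have hdisD : Disjoint (LinearMap.range f) D := hC.disjoint.mono_right inf_le_left
  have hdisD' : Disjoint (LinearMap.range g) D' := hC'.disjoint.mono_right inf_le_left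
  have hfinD : finrank ℂ D = d1 := by
    have h1 := Submodule.finrank_sup_add_finrank_inf_eq (LinearMap.range f) D
    rw [hsupD, hdisD.eq_bot, finrank_bot, hr, hkerg] at h1
    omega
  have hfinD' : finrank ℂ D' = d2 := by
    have h1 := Submodule.finrank_sup_add_finrank_inf_eq (LinearMap.range g) D'
    rw [hsupD', hdisD'.eq_bot, finrank_bot, hs, hkerf] at h1
    omega
  set vb : Basis (Fin r) ℂ (LinearMap.range f) := finBasisOfFinrankEq ℂ _ hr with hvb
  set wb : Basis (Fin s) ℂ (LinearMap.range g) := finBasisOfFinrankEq ℂ _ hs with hwb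
  set db : Basis (Fin d1) ℂ D := finBasisOfFinrankEq ℂ _ hfinD with hdb
  set db' : Basis (Fin d2) ℂ D' := finBasisOfFinrankEq ℂ _ hfinD' with hdb'
  have hu0 : ∀ i : Fin r, ∃ x, f x = (vb i : Fin p → ℂ) := fun i =>
    LinearMap.mem_range.mp (vb i).2
  choose u hu using hu0
  have he0 : ∀ j : Fin s, ∃ x, g x = (wb j : Fin q → ℂ) := fun j =>
    LinearMap.mem_range.mp (wb j).2
  choose e he using he0
  -- linear independence of the two families
  have liV : LinearIndependent ℂ
      (Sum.elim (Sum.elim (fun i => (vb i : Fin p → ℂ)) (fun k => (db k : Fin p → ℂ))) e) :=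
    auxLI f g D hsupD hdisD vb wb db e he
  have liW : LinearIndependent ℂ
      (Sum.elim (Sum.elim (fun j => (wb j : Fin q → ℂ)) (fun k => (db' k : Fin q → ℂ))) u) :=
    auxLI g f D' hsupD' hdisD' wb vb db' u hu
  have cardV : Fintype.card ((Fin r ⊕ Fin d1) ⊕ Fin s) = finrank ℂ (Fin p → ℂ) := by
    simp [hfrp]; omega
  have cardW : Fintype.card ((Fin s ⊕ Fin d2) ⊕ Fin r) = finrank ℂ (Fin q → ℂ) := by
    simp [hfrq]; omega
  haveI : Nonempty ((Fin r ⊕ Fin d1) ⊕ Fin s) := by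
    apply Fintype.card_pos_iff.mp; rw [cardV, hfrp]; omega
  haveI : Nonempty ((Fin s ⊕ Fin d2) ⊕ Fin r) := by
    apply Fintype.card_pos_iff.mp; rw [cardW, hfrq]; omega
  set bV0 := basisOfLinearIndependentOfCardEqFinrank liV cardV with hbV0def
  set bW0 := basisOfLinearIndependentOfCardEqFinrank liW cardW with hbW0def
  have hbV0 : ⇑bV0 = Sum.elim (Sum.elim (fun i => (vb i : Fin p → ℂ))
      (fun k => (db k : Fin p → ℂ))) e :=
    coe_basisOfLinearIndependentOfCardEqFinrank liV cardV
  have hbW0 : ⇑bW0 = Sum.elim (Sum.elim (fun j => (wb j : Fin q → ℂ))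
      (fun k => (db' k : Fin q → ℂ))) u :=
    coe_basisOfLinearIndependentOfCardEqFinrank liW cardW
  have hpe : r + (s + d1) = p := by omega
  have hqe : r + (s + d2) = q := by omega
  set ep := myEquiv r s d1 p hpe with hepdef
  set eq := myEquiv' r s d2 q hqe with heqdef
  have hep1 : ∀ i : Fin r, ((ep (Sum.inl (Sum.inl i)) : Fin p) : ℕ) = i := by
    intro i; simp [hepdef, myEquiv]
  have hep2 : ∀ k : Fin d1, ((ep (Sum.inl (Sum.inr k)) : Fin p) : ℕ) = r + (s + k) := by
    intro k; simp [hepdef, myEquiv]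
  have hep3 : ∀ j : Fin s, ((ep (Sum.inr j) : Fin p) : ℕ) = r + j := by
    intro j; simp [hepdef, myEquiv]
  have heq1 : ∀ i : Fin r, ((eq (Sum.inr i) : Fin q) : ℕ) = i := by
    intro i; simp [heqdef, myEquiv']
  have heq2 : ∀ j : Fin s, ((eq (Sum.inl (Sum.inl j)) : Fin q) : ℕ) = r + j := by
    intro j; simp [heqdef, myEquiv']
  have heq3 : ∀ k : Fin d2, ((eq (Sum.inl (Sum.inr k)) : Fin q) : ℕ) = r + (s + k) := by
    intro k; simp [heqdef, myEquiv']
  set BV := bV0.reindex ep with hBVdef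
  set BW := bW0.reindex eq with hBWdef
  -- the matrices of f and g in these bases
  have hMA : LinearMap.toMatrix BW BV f = canonA p q r := by
    ext i j
    obtain ⟨x, rfl⟩ := ep.surjective i
    obtain ⟨y, rfl⟩ := eq.surjective j
    rw [LinearMap.toMatrix_apply, hBWdef, hBVdef, Basis.reindex_apply,
      Basis.repr_reindex_apply, Equiv.symm_apply_apply, Equiv.symm_apply_apply, hbW0]
    rcases y with (j' | k) | i'
    · -- column of wb j' : f (wb j') = 0
      have h0 : f ((wb j' : Fin q → ℂ)) = 0 := LinearMap.mem_ker.mp (hfg (wb j').2)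
      rw [Sum.elim_inl, Sum.elim_inl, h0, map_zero, Finsupp.coe_zero, Pi.zero_apply]
      have : ¬ (((ep x : Fin p) : ℕ) = ((eq (Sum.inl (Sum.inl j')) : Fin q) : ℕ)
          ∧ ((ep x : Fin p) : ℕ) < r) := by
        rw [heq2]; rintro ⟨h1, h2⟩; omega
      simp [canonA, this]
    · have h0 : f ((db' k : Fin q → ℂ)) = 0 := LinearMap.mem_ker.mp (hD'f (db' k).2)
      rw [Sum.elim_inl, Sum.elim_inr, h0, map_zero, Finsupp.coe_zero, Pi.zero_apply]
      have : ¬ (((ep x : Fin p) : ℕ) = ((eq (Sum.inl (Sum.inr k)) : Fin q) : ℕ)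
          ∧ ((ep x : Fin p) : ℕ) < r) := by
        rw [heq3]; rintro ⟨h1, h2⟩; omega
      simp [canonA, this]
    · -- column of u i' : f (u i') = vb i'
      rw [Sum.elim_inr, hu]
      have hv : (vb i' : Fin p → ℂ) = bV0 (Sum.inl (Sum.inl i')) := by rw [hbV0]; rfl
      rw [hv, Basis.repr_self]
      rcases x with (i | k) | j
      · rw [Finsupp.single_apply]
        simp only [canonA, Matrix.of_apply, hep1, heq1]
        by_cases hii : i' = i
        · subst hii; rw [if_pos rfl, if_pos ⟨rfl, i'.2⟩]
        · rw [if_neg (by simpa using hii),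
            if_neg (by rintro ⟨h1, -⟩; exact hii (Fin.ext h1).symm)]
      · have h1 : ¬ (((ep (Sum.inl (Sum.inr k)) : Fin p) : ℕ)
            = ((eq (Sum.inr i') : Fin q) : ℕ) ∧ ((ep (Sum.inl (Sum.inr k)) : Fin p) : ℕ) < r) := by
          rw [hep2]; rintro ⟨h2, h3⟩; omega
        simp [canonA, h1, Finsupp.single_apply]
      · have h1 : ¬ (((ep (Sum.inr j) : Fin p) : ℕ)
            = ((eq (Sum.inr i') : Fin q) : ℕ) ∧ ((ep (Sum.inr j) : Fin p) : ℕ) < r) := by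
          rw [hep3]; rintro ⟨h2, h3⟩; omega
        simp [canonA, h1, Finsupp.single_apply]
  have hMB : LinearMap.toMatrix BV BW g = canonB p q r s := by
    ext j i
    obtain ⟨y, rfl⟩ := eq.surjective j
    obtain ⟨x, rfl⟩ := ep.surjective i
    rw [LinearMap.toMatrix_apply, hBWdef, hBVdef, Basis.reindex_apply,
      Basis.repr_reindex_apply, Equiv.symm_apply_apply, Equiv.symm_apply_apply, hbV0]
    rcases x with (i' | k) | j'
    · have h0 : g ((vb i' : Fin p → ℂ)) = 0 := LinearMap.mem_ker.mp (hgf (vb i').2)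
      rw [Sum.elim_inl, Sum.elim_inl, h0, map_zero, Finsupp.coe_zero, Pi.zero_apply]
      have hn : ¬ (((eq y : Fin q) : ℕ) = ((ep (Sum.inl (Sum.inl i')) : Fin p) : ℕ)
          ∧ r ≤ ((eq y : Fin q) : ℕ) ∧ ((eq y : Fin q) : ℕ) < r + s) := by
        rw [hep1]; rintro ⟨h1, h2, h3⟩; have := i'.2; omega
      simp [canonB, hn]
    · have h0 : g ((db k : Fin p → ℂ)) = 0 := LinearMap.mem_ker.mp (hDg (db k).2)
      rw [Sum.elim_inl, Sum.elim_inr, h0, map_zero, Finsupp.coe_zero, Pi.zero_apply]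
      have hn : ¬ (((eq y : Fin q) : ℕ) = ((ep (Sum.inl (Sum.inr k)) : Fin p) : ℕ)
          ∧ r ≤ ((eq y : Fin q) : ℕ) ∧ ((eq y : Fin q) : ℕ) < r + s) := by
        rw [hep2]; rintro ⟨h1, h2, h3⟩; omega
      simp [canonB, hn]
    · rw [Sum.elim_inr, he]
      have hw : (wb j' : Fin q → ℂ) = bW0 (Sum.inl (Sum.inl j')) := by rw [hbW0]; rfl
      rw [hw, Basis.repr_self]
      rcases y with (j'' | k) | i
      · rw [Finsupp.single_apply]
        simp only [canonB, Matrix.of_apply, heq2, hep3]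
        by_cases hjj : j' = j''
        · subst hjj
          rw [if_pos rfl, if_pos ⟨rfl, Nat.le_add_right r _, Nat.add_lt_add_left j'.2 r⟩]
        · rw [if_neg (by simpa using hjj),
            if_neg (by rintro ⟨h1, -, -⟩; exact hjj (Fin.ext (by omega)))]
      · have hn : ¬ (((eq (Sum.inl (Sum.inr k)) : Fin q) : ℕ)
            = ((ep (Sum.inr j') : Fin p) : ℕ) ∧ r ≤ ((eq (Sum.inl (Sum.inr k)) : Fin q) : ℕ)
            ∧ ((eq (Sum.inl (Sum.inr k)) : Fin q) : ℕ) < r + s) := by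
          rw [heq3]; rintro ⟨h1, h2, h3⟩; omega
        simp [canonB, hn, Finsupp.single_apply]
      · have hn : ¬ (((eq (Sum.inr i) : Fin q) : ℕ)
            = ((ep (Sum.inr j') : Fin p) : ℕ) ∧ r ≤ ((eq (Sum.inr i) : Fin q) : ℕ)
            ∧ ((eq (Sum.inr i) : Fin q) : ℕ) < r + s) := by
          rw [heq1]; rintro ⟨h1, h2, h3⟩; have := i.2; omega
        simp [canonB, hn, Finsupp.single_apply]
  -- express a and b via change of basis
  set stdp := Pi.basisFun ℂ (Fin p) with hstdp
  set stdq := Pi.basisFun ℂ (Fin q) with hstdq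
  have ha2 : LinearMap.toMatrix stdq stdp f = a := by
    ext i j
    rw [LinearMap.toMatrix_apply]
    simp [hf, hstdq, hstdp]
  have hb2 : LinearMap.toMatrix stdp stdq g = b := by
    ext i j
    rw [LinearMap.toMatrix_apply]
    simp [hg, hstdq, hstdp]
  have hcompA : LinearMap.toMatrix stdq stdp f
      = stdp.toMatrix ⇑BV * canonA p q r * BW.toMatrix ⇑stdq := by
    rw [← hMA, ← LinearMap.toMatrix_id_eq_basis_toMatrix, ← LinearMap.toMatrix_id_eq_basis_toMatrix,
      ← LinearMap.toMatrix_comp, ← LinearMap.toMatrix_comp, LinearMap.id_comp, LinearMap.comp_id]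
  have hcompB : LinearMap.toMatrix stdp stdq g
      = stdq.toMatrix ⇑BW * canonB p q r s * BV.toMatrix ⇑stdp := by
    rw [← hMB, ← LinearMap.toMatrix_id_eq_basis_toMatrix, ← LinearMap.toMatrix_id_eq_basis_toMatrix,
      ← LinearMap.toMatrix_comp, ← LinearMap.toMatrix_comp, LinearMap.id_comp, LinearMap.comp_id]
  refine ⟨⟨stdp.toMatrix ⇑BV, BV.toMatrix ⇑stdp,
      Basis.toMatrix_mul_toMatrix_flip _ _, Basis.toMatrix_mul_toMatrix_flip _ _⟩,
    ⟨stdq.toMatrix ⇑BW, BW.toMatrix ⇑stdq,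
      Basis.toMatrix_mul_toMatrix_flip _ _, Basis.toMatrix_mul_toMatrix_flip _ _⟩, ?_, ?_⟩
  · show a = stdp.toMatrix ⇑BV * canonA p q r * BW.toMatrix ⇑stdq
    rw [← ha2, hcompA]
  · show b = stdq.toMatrix ⇑BW * canonB p q r s * BV.toMatrix ⇑stdp
    rw [← hb2, hcompB]

theorem rank_conj {p q : ℕ} (A : Matrix (Fin p) (Fin q) ℂ)
    (U : (Matrix (Fin p) (Fin p) ℂ)ˣ) (V : (Matrix (Fin q) (Fin q) ℂ)ˣ) :
    ((U : Matrix (Fin p) (Fin p) ℂ) * A * ((V⁻¹ : _) : Matrix (Fin q) (Fin q) ℂ)).rank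
      = A.rank := by
  refine le_antisymm ?_ ?_
  · calc ((U : Matrix (Fin p) (Fin p) ℂ) * A * ((V⁻¹ : _) : Matrix (Fin q) (Fin q) ℂ)).rank
        ≤ ((U : Matrix (Fin p) (Fin p) ℂ) * A).rank := Matrix.rank_mul_le_left _ _
      _ ≤ A.rank := Matrix.rank_mul_le_right _ _
  · have hA : A = ((U⁻¹ : _) : Matrix (Fin p) (Fin p) ℂ)
        * ((U : Matrix (Fin p) (Fin p) ℂ) * A * ((V⁻¹ : _) : Matrix (Fin q) (Fin q) ℂ))
        * (V : Matrix (Fin q) (Fin q) ℂ) := by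
      rw [Matrix.mul_assoc, Matrix.mul_assoc, Units.inv_mul, Matrix.mul_one,
        ← Matrix.mul_assoc, Units.inv_mul, Matrix.one_mul]
    calc A.rank = (((U⁻¹ : _) : Matrix (Fin p) (Fin p) ℂ)
          * ((U : Matrix (Fin p) (Fin p) ℂ) * A * ((V⁻¹ : _) : Matrix (Fin q) (Fin q) ℂ))
          * (V : Matrix (Fin q) (Fin q) ℂ)).rank := by rw [← hA]
      _ ≤ (((U⁻¹ : _) : Matrix (Fin p) (Fin p) ℂ)
          * ((U : Matrix (Fin p) (Fin p) ℂ) * A * ((V⁻¹ : _) : Matrix (Fin q) (Fin q) ℂ))).rank :=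
        Matrix.rank_mul_le_left _ _
      _ ≤ _ := Matrix.rank_mul_le_right _ _

/-- Two pairs `(a, b)` and `(a', b')` with `ab = ba = 0` and `a'b' = b'a' = 0` are
conjugate under `GL_p(ℂ) × GL_q(ℂ)` (acting by `(a, b) ↦ (g₁ a g₂⁻¹, g₂ b g₁⁻¹)`)
iff `rank a = rank a'` and `rank b = rank b'`. -/
theorem stmt15 (p q : ℕ) (hp : 1 ≤ p) (hq : 1 ≤ q)
    (a a' : Matrix (Fin p) (Fin q) ℂ) (b b' : Matrix (Fin q) (Fin p) ℂ)
    (hab : a * b = 0) (hba : b * a = 0)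
    (hab' : a' * b' = 0) (hba' : b' * a' = 0) :
    (∃ (g₁ : (Matrix (Fin p) (Fin p) ℂ)ˣ) (g₂ : (Matrix (Fin q) (Fin q) ℂ)ˣ),
        a' = (g₁ : Matrix (Fin p) (Fin p) ℂ) * a * ((g₂⁻¹ : _) : Matrix (Fin q) (Fin q) ℂ) ∧
        b' = (g₂ : Matrix (Fin q) (Fin q) ℂ) * b * ((g₁⁻¹ : _) : Matrix (Fin p) (Fin p) ℂ)) ↔
      (a.rank = a'.rank ∧ b.rank = b'.rank) := by
  constructor
  · rintro ⟨g₁, g₂, rfl, rfl⟩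
    constructor
    · rw [rank_conj]
    · have := rank_conj b g₂ g₁
      rw [this]
  · rintro ⟨h₁, h₂⟩
    obtain ⟨u₁, u₂, hua, hub⟩ := key_s15 p q hp hq a b hab hba
    obtain ⟨v₁, v₂, hva, hvb⟩ := key_s15 p q hp hq a' b' hab' hba'
    rw [← h₁] at hva
    rw [← h₁, ← h₂] at hvb
    refine ⟨v₁ * u₁⁻¹, v₂ * u₂⁻¹, ?_, ?_⟩
    · have hc : ((u₁⁻¹ : _) : Matrix (Fin p) (Fin p) ℂ) * a * (u₂ : Matrix (Fin q) (Fin q) ℂ)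
          = canonA p q a.rank := by
        conv_lhs => rw [hua]
        rw [Matrix.mul_assoc ((u₁⁻¹ : _) : Matrix (Fin p) (Fin p) ℂ),
          Matrix.mul_assoc ((u₁ : Matrix (Fin p) (Fin p) ℂ) * canonA p q a.rank),
          Units.inv_mul, Matrix.mul_one, ← Matrix.mul_assoc, Units.inv_mul, Matrix.one_mul]
      rw [hva, ← hc]
      simp only [Units.val_mul, _root_.mul_inv_rev, inv_inv, Units.val_mul, Matrix.mul_assoc]
    · have hc : ((u₂⁻¹ : _) : Matrix (Fin q) (Fin q) ℂ) * b * (u₁ : Matrix (Fin p) (Fin p) ℂ)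
          = canonB p q a.rank b.rank := by
        conv_lhs => rw [hub]
        rw [Matrix.mul_assoc ((u₂⁻¹ : _) : Matrix (Fin q) (Fin q) ℂ),
          Matrix.mul_assoc ((u₂ : Matrix (Fin q) (Fin q) ℂ) * canonB p q a.rank b.rank),
          Units.inv_mul, Matrix.mul_one, ← Matrix.mul_assoc, Units.inv_mul, Matrix.one_mul]
      rw [hvb, ← hc]
      simp only [Units.val_mul, _root_.mul_inv_rev, inv_inv, Units.val_mul, Matrix.mul_assoc]
end

section
/- Let a, a' ∈ M_{p×q}(ℂ) and b, b' ∈ M_{q×p}(ℂ) satisfy ab = 0, ba = 0, a'b' = 0, and b'a' = 0, and let L, L' ⊆ ℂ^p be one-dimensional subspaces. Then there exist invertible matrices g₁ ∈ GL_p(ℂ) and g₂ ∈ GL_q(ℂ) with a' = g₁ a g₂⁻¹, b' = g₂ b g₁⁻¹, and g₁(L) = L' if and only if the following four conditions hold: rank a = rank a'; rank b = rank b'; L is contained in the column space of a if and only if L' is contained in the column space of a'; and L is contained in the kernel of b if and only if L' is contained in the kernel of b'. -/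
open Matrix

section Helpers
open Submodule Module
variable {K : Type*} [Field K] {V V' W W' : Type*} [AddCommGroup V] [Module K V]
  [AddCommGroup V'] [Module K V'] [AddCommGroup W] [Module K W] [AddCommGroup W'] [Module K W']

lemma exists_compl_between {S T : Submodule K V} (h : S ≤ T) :
    ∃ M, S ⊓ M = ⊥ ∧ S ⊔ M = T := by
  obtain ⟨q, hq⟩ := Submodule.exists_isCompl (Submodule.comap T.subtype S)
  have hS : Submodule.map T.subtype (Submodule.comap T.subtype S) = S := by
    rw [Submodule.map_comap_subtype, inf_eq_right.2 h]
  refine ⟨q.map T.subtype, ?_, ?_⟩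
  · rw [← hS, ← Submodule.map_inf _ T.injective_subtype, hq.inf_eq_bot, Submodule.map_bot]
  · rw [← hS, ← Submodule.map_sup, hq.sup_eq_top, Submodule.map_subtype_top]

lemma finrank_compl_between [FiniteDimensional K V] {S M T : Submodule K V}
    (hd : S ⊓ M = ⊥) (hs : S ⊔ M = T) :
    finrank K S + finrank K M = finrank K T := by
  have := Submodule.finrank_sup_add_finrank_inf_eq S M
  rw [hd, hs, finrank_bot, add_zero] at this
  omega

lemma glueSub {S T : Submodule K V} {S' T' : Submodule K V'}
    (hd : S ⊓ T = ⊥) (hd' : S' ⊓ T' = ⊥)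
    (f₁ : S ≃ₗ[K] S') (f₂ : T ≃ₗ[K] T') :
    ∃ e : ↥(S ⊔ T) ≃ₗ[K] ↥(S' ⊔ T'),
      (∀ x (hx : x ∈ S), (e ⟨x, Submodule.mem_sup_left hx⟩ : V') = f₁ ⟨x, hx⟩) ∧
      (∀ x (hx : x ∈ T), (e ⟨x, Submodule.mem_sup_right hx⟩ : V') = f₂ ⟨x, hx⟩) := by
  set W := S ⊔ T with hW
  set P := Submodule.comap W.subtype S with hP
  set Q := Submodule.comap W.subtype T with hQ
  have hPQ : IsCompl P Q := by
    constructor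
    · rw [disjoint_iff]
      ext x
      simp only [Submodule.mem_inf, Submodule.mem_comap, Submodule.mem_bot]
      constructor
      · rintro ⟨h1, h2⟩
        have : (x : V) ∈ S ⊓ T := ⟨h1, h2⟩
        rw [hd] at this
        exact Subtype.ext this
      · rintro rfl; simp
    · rw [codisjoint_iff]
      apply Submodule.map_injective_of_injective W.injective_subtype
      rw [Submodule.map_sup, Submodule.map_comap_subtype, Submodule.map_comap_subtype,
        Submodule.map_subtype_top, inf_eq_right.2 (le_sup_left : S ≤ W),
        inf_eq_right.2 (le_sup_right : T ≤ W)]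
  set W' := S' ⊔ T' with hW'
  set P' := Submodule.comap W'.subtype S' with hP'
  set Q' := Submodule.comap W'.subtype T' with hQ'
  have hPQ' : IsCompl P' Q' := by
    constructor
    · rw [disjoint_iff]
      ext x
      simp only [Submodule.mem_inf, Submodule.mem_comap, Submodule.mem_bot]
      constructor
      · rintro ⟨h1, h2⟩
        have : (x : V') ∈ S' ⊓ T' := ⟨h1, h2⟩
        rw [hd'] at this
        exact Subtype.ext this
      · rintro rfl; simp
    · rw [codisjoint_iff]
      apply Submodule.map_injective_of_injective W'.injective_subtype
      rw [Submodule.map_sup, Submodule.map_comap_subtype, Submodule.map_comap_subtype,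
        Submodule.map_subtype_top, inf_eq_right.2 (le_sup_left : S' ≤ W'),
        inf_eq_right.2 (le_sup_right : T' ≤ W')]
  let c₁ : P ≃ₗ[K] S := Submodule.comapSubtypeEquivOfLe (le_sup_left : S ≤ W)
  let c₂ : Q ≃ₗ[K] T := Submodule.comapSubtypeEquivOfLe (le_sup_right : T ≤ W)
  let c₁' : P' ≃ₗ[K] S' := Submodule.comapSubtypeEquivOfLe (le_sup_left : S' ≤ W')
  let c₂' : Q' ≃ₗ[K] T' := Submodule.comapSubtypeEquivOfLe (le_sup_right : T' ≤ W')
  let e : ↥W ≃ₗ[K] ↥W' :=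
    (Submodule.prodEquivOfIsCompl P Q hPQ).symm ≪≫ₗ
      (((c₁ ≪≫ₗ f₁) ≪≫ₗ c₁'.symm).prodCongr ((c₂ ≪≫ₗ f₂) ≪≫ₗ c₂'.symm)) ≪≫ₗ
      Submodule.prodEquivOfIsCompl P' Q' hPQ'
  have key₁ : ∀ x (hx : x ∈ S), (e ⟨x, Submodule.mem_sup_left hx⟩ : V') = f₁ ⟨x, hx⟩ := by
    intro x hx
    have hxW : x ∈ W := Submodule.mem_sup_left hx
    have hmem : (⟨x, hxW⟩ : W) ∈ P := hx
    have h0 : (Submodule.prodEquivOfIsCompl P Q hPQ).symm ⟨x, hxW⟩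
        = ((⟨⟨x, hxW⟩, hmem⟩ : P), 0) := by
      have := Submodule.prodEquivOfIsCompl_symm_apply_left (p := P) (q := Q) hPQ
        ⟨⟨x, hxW⟩, hmem⟩
      exact this
    show ((Submodule.prodEquivOfIsCompl P' Q' hPQ')
        ((((c₁ ≪≫ₗ f₁) ≪≫ₗ c₁'.symm).prodCongr (((c₂ ≪≫ₗ f₂) ≪≫ₗ c₂'.symm)))
          ((Submodule.prodEquivOfIsCompl P Q hPQ).symm ⟨x, hxW⟩)) : V') = _
    rw [h0]
    simp only [LinearEquiv.prodCongr_apply, LinearEquiv.trans_apply, map_zero,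
      Submodule.coe_prodEquivOfIsCompl', Submodule.coe_zero, add_zero]
    have hc₁ : c₁ ⟨⟨x, hxW⟩, hmem⟩ = ⟨x, hx⟩ := by
      apply Subtype.ext
      exact Submodule.comapSubtypeEquivOfLe_apply_coe _ _
    rw [hc₁]
    have : ∀ y : S', ((c₁'.symm y : P') : V') = (y : V') := by
      intro y
      have := Submodule.comapSubtypeEquivOfLe_apply_coe (le_sup_left : S' ≤ W') (c₁'.symm y)
      rw [show c₁' (c₁'.symm y) = y from c₁'.apply_symm_apply y] at this
      exact this.symm
    exact this _
  have key₂ : ∀ x (hx : x ∈ T), (e ⟨x, Submodule.mem_sup_right hx⟩ : V') = f₂ ⟨x, hx⟩ := by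
    intro x hx
    have hxW : x ∈ W := Submodule.mem_sup_right hx
    have hmem : (⟨x, hxW⟩ : W) ∈ Q := hx
    have h0 : (Submodule.prodEquivOfIsCompl P Q hPQ).symm ⟨x, hxW⟩
        = (0, (⟨⟨x, hxW⟩, hmem⟩ : Q)) :=
      Submodule.prodEquivOfIsCompl_symm_apply_right (p := P) (q := Q) hPQ ⟨⟨x, hxW⟩, hmem⟩
    show ((Submodule.prodEquivOfIsCompl P' Q' hPQ')
        ((((c₁ ≪≫ₗ f₁) ≪≫ₗ c₁'.symm).prodCongr (((c₂ ≪≫ₗ f₂) ≪≫ₗ c₂'.symm)))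
          ((Submodule.prodEquivOfIsCompl P Q hPQ).symm ⟨x, hxW⟩)) : V') = _
    rw [h0]
    simp only [LinearEquiv.prodCongr_apply, LinearEquiv.trans_apply, map_zero,
      Submodule.coe_prodEquivOfIsCompl', Submodule.coe_zero, zero_add]
    have hc₂ : c₂ ⟨⟨x, hxW⟩, hmem⟩ = ⟨x, hx⟩ := by
      apply Subtype.ext
      exact Submodule.comapSubtypeEquivOfLe_apply_coe _ _
    rw [hc₂]
    have : ∀ y : T', ((c₂'.symm y : Q') : V') = (y : V') := by
      intro y
      have := Submodule.comapSubtypeEquivOfLe_apply_coe (le_sup_right : T' ≤ W') (c₂'.symm y)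
      rw [show c₂' (c₂'.symm y) = y from c₂'.apply_symm_apply y] at this
      exact this.symm
    exact this _
  exact ⟨e, key₁, key₂⟩

lemma cast_equiv {X Y : Submodule K V} {X' Y' : Submodule K V'} (h : X = Y) (h' : X' = Y')
    (e : X ≃ₗ[K] X') :
    ∃ e' : Y ≃ₗ[K] Y', ∀ x (hx : x ∈ X) (hy : x ∈ Y), (e' ⟨x, hy⟩ : V') = e ⟨x, hx⟩ := by
  subst h h'; exact ⟨e, fun x hx hy => rfl⟩

lemma equiv_of_top {X : Submodule K V} {X' : Submodule K V'} (hX : X = ⊤) (hX' : X' = ⊤)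
    (e : X ≃ₗ[K] X') : ∃ f : V ≃ₗ[K] V', ∀ x (hx : x ∈ X), f x = ↑(e ⟨x, hx⟩) := by
  subst hX hX'
  exact ⟨Submodule.topEquiv.symm ≪≫ₗ e ≪≫ₗ Submodule.topEquiv, fun x hx => rfl⟩

lemma map_eq_of [FiniteDimensional K V] [FiniteDimensional K V'] (f : V ≃ₗ[K] V')
    {S : Submodule K V} {S' : Submodule K V'}
    (h : ∀ x ∈ S, f x ∈ S') (hr : finrank K S = finrank K S') :
    Submodule.map (f : V →ₗ[K] V') S = S' := by
  apply Submodule.eq_of_le_of_finrank_eq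
  · rw [Submodule.map_le_iff_le_comap]
    intro x hx
    exact h x hx
  · rw [LinearEquiv.finrank_map_eq, hr]

lemma line_le_or_disjoint [FiniteDimensional K V] {L S : Submodule K V}
    (hL : finrank K L = 1) : L ≤ S ∨ L ⊓ S = ⊥ := by
  by_cases h : L ⊓ S = ⊥
  · exact Or.inr h
  · left
    have h1 : finrank K ↥(L ⊓ S) ≠ 0 := fun h0 => h (Submodule.finrank_eq_zero.mp h0)
    have h2 : finrank K ↥(L ⊓ S) ≤ 1 := hL ▸ Submodule.finrank_mono inf_le_left
    have : L ⊓ S = L := Submodule.eq_of_le_of_finrank_eq inf_le_left (by omega)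
    rw [← this]; exact inf_le_right

lemma exists_adapted [FiniteDimensional K V] [FiniteDimensional K V']
    (hVV : finrank K V = finrank K V')
    {R Kk L : Submodule K V} {R' Kk' L' : Submodule K V'}
    (hRK : R ≤ Kk) (hRK' : R' ≤ Kk')
    (hrr : finrank K R = finrank K R') (hkk : finrank K Kk = finrank K Kk')
    (hL1 : finrank K L = 1) (hL1' : finrank K L' = 1)
    (h1 : L ≤ R ↔ L' ≤ R') (h2 : L ≤ Kk ↔ L' ≤ Kk') :
    ∃ f : V ≃ₗ[K] V', Submodule.map (f : V →ₗ[K] V') R = R' ∧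
      Submodule.map (f : V →ₗ[K] V') Kk = Kk' ∧ Submodule.map (f : V →ₗ[K] V') L = L' := by
  have hLL' : finrank K L = finrank K L' := hL1.trans hL1'.symm
  by_cases hLR : L ≤ R
  · -- Case A : L ≤ R
    have hLR' : L' ≤ R' := h1.1 hLR
    obtain ⟨M, hdM, hsM⟩ := exists_compl_between hLR
    obtain ⟨M', hdM', hsM'⟩ := exists_compl_between hLR'
    have frM : finrank K M = finrank K M' := by
      have t1 := finrank_compl_between hdM hsM
      have t2 := finrank_compl_between hdM' hsM'
      omega
    obtain ⟨eR₀, pR₀L, -⟩ := glueSub hdM hdM'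
      (LinearEquiv.ofFinrankEq _ _ hLL') (LinearEquiv.ofFinrankEq _ _ frM)
    obtain ⟨eR, peR⟩ := cast_equiv hsM hsM' eR₀
    obtain ⟨C, hdC, hsC⟩ := exists_compl_between hRK
    obtain ⟨C', hdC', hsC'⟩ := exists_compl_between hRK'
    have frC : finrank K C = finrank K C' := by
      have t1 := finrank_compl_between hdC hsC
      have t2 := finrank_compl_between hdC' hsC'
      omega
    obtain ⟨eK₀, pK₀R, -⟩ := glueSub hdC hdC' eR (LinearEquiv.ofFinrankEq _ _ frC)
    obtain ⟨eK, peK⟩ := cast_equiv hsC hsC' eK₀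
    obtain ⟨U, hdU, hsU⟩ := exists_compl_between (le_top : Kk ≤ ⊤)
    obtain ⟨U', hdU', hsU'⟩ := exists_compl_between (le_top : Kk' ≤ ⊤)
    have frU : finrank K U = finrank K U' := by
      have t1 := finrank_compl_between hdU hsU
      have t2 := finrank_compl_between hdU' hsU'
      rw [finrank_top] at t1 t2
      omega
    obtain ⟨eT₀, pT₀K, -⟩ := glueSub hdU hdU' eK (LinearEquiv.ofFinrankEq _ _ frU)
    obtain ⟨f, pf⟩ := equiv_of_top hsU hsU' eT₀
    have pK : ∀ x (hx : x ∈ Kk), f x = ↑(eK ⟨x, hx⟩) := by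
      intro x hx
      rw [pf x (Submodule.mem_sup_left hx)]
      exact pT₀K x hx
    have pR : ∀ x (hx : x ∈ R), f x = ↑(eR ⟨x, hx⟩) := by
      intro x hx
      rw [pK x (hRK hx), peK x (Submodule.mem_sup_left hx) (hRK hx)]
      exact pK₀R x hx
    have pL : ∀ x (hx : x ∈ L), f x = ↑((LinearEquiv.ofFinrankEq _ _ hLL' : L ≃ₗ[K] L') ⟨x, hx⟩) := by
      intro x hx
      rw [pR x (hLR hx), peR x (Submodule.mem_sup_left hx) (hLR hx)]
      exact pR₀L x hx
    exact ⟨f,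
      map_eq_of f (fun x hx => by rw [pR x hx]; exact Submodule.coe_mem _) hrr,
      map_eq_of f (fun x hx => by rw [pK x hx]; exact Submodule.coe_mem _) hkk,
      map_eq_of f (fun x hx => by rw [pL x hx]; exact Submodule.coe_mem _) hLL'⟩
  · by_cases hLK : L ≤ Kk
    · -- Case B : L ≤ Kk, ¬ L ≤ R
      have hLR' : ¬ L' ≤ R' := fun h => hLR (h1.2 h)
      have hLK' : L' ≤ Kk' := h2.1 hLK
      have hdL : R ⊓ L = ⊥ := by
        rcases line_le_or_disjoint (S := R) hL1 with h | h
        · exact absurd h hLR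
        · rw [inf_comm] at h; exact h
      have hdL' : R' ⊓ L' = ⊥ := by
        rcases line_le_or_disjoint (S := R') hL1' with h | h
        · exact absurd h hLR'
        · rw [inf_comm] at h; exact h
      obtain ⟨e₂, p₂R, p₂L⟩ := glueSub hdL hdL'
        (LinearEquiv.ofFinrankEq _ _ hrr) (LinearEquiv.ofFinrankEq _ _ hLL')
      have hXK : R ⊔ L ≤ Kk := sup_le hRK hLK
      have hXK' : R' ⊔ L' ≤ Kk' := sup_le hRK' hLK'
      obtain ⟨C, hdC, hsC⟩ := exists_compl_between hXK
      obtain ⟨C', hdC', hsC'⟩ := exists_compl_between hXK'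
      have frX : finrank K ↥(R ⊔ L) = finrank K ↥(R' ⊔ L') := by
        have t1 := finrank_compl_between hdL rfl
        have t2 := finrank_compl_between hdL' rfl
        omega
      have frC : finrank K C = finrank K C' := by
        have t1 := finrank_compl_between hdC hsC
        have t2 := finrank_compl_between hdC' hsC'
        omega
      obtain ⟨eK₀, pK₀X, -⟩ := glueSub hdC hdC' e₂ (LinearEquiv.ofFinrankEq _ _ frC)
      obtain ⟨eK, peK⟩ := cast_equiv hsC hsC' eK₀
      obtain ⟨U, hdU, hsU⟩ := exists_compl_between (le_top : Kk ≤ ⊤)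
      obtain ⟨U', hdU', hsU'⟩ := exists_compl_between (le_top : Kk' ≤ ⊤)
      have frU : finrank K U = finrank K U' := by
        have t1 := finrank_compl_between hdU hsU
        have t2 := finrank_compl_between hdU' hsU'
        rw [finrank_top] at t1 t2
        omega
      obtain ⟨eT₀, pT₀K, -⟩ := glueSub hdU hdU' eK (LinearEquiv.ofFinrankEq _ _ frU)
      obtain ⟨f, pf⟩ := equiv_of_top hsU hsU' eT₀
      have pK : ∀ x (hx : x ∈ Kk), f x = ↑(eK ⟨x, hx⟩) := by
        intro x hx
        rw [pf x (Submodule.mem_sup_left hx)]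
        exact pT₀K x hx
      have pX : ∀ x (hx : x ∈ R ⊔ L), f x = ↑(e₂ ⟨x, hx⟩) := by
        intro x hx
        rw [pK x (hXK hx), peK x (Submodule.mem_sup_left hx) (hXK hx)]
        exact pK₀X x hx
      have pR : ∀ x (hx : x ∈ R), f x ∈ R' := by
        intro x hx
        rw [pX x (Submodule.mem_sup_left hx), p₂R x hx]
        exact Submodule.coe_mem _
      have pL : ∀ x (hx : x ∈ L), f x ∈ L' := by
        intro x hx
        rw [pX x (Submodule.mem_sup_right hx), p₂L x hx]
        exact Submodule.coe_mem _
      exact ⟨f, map_eq_of f pR hrr,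
        map_eq_of f (fun x hx => by rw [pK x hx]; exact Submodule.coe_mem _) hkk,
        map_eq_of f pL hLL'⟩
    · -- Case C : ¬ L ≤ Kk
      have hLK' : ¬ L' ≤ Kk' := fun h => hLK (h2.2 h)
      have hdL : Kk ⊓ L = ⊥ := by
        rcases line_le_or_disjoint (S := Kk) hL1 with h | h
        · exact absurd h hLK
        · rw [inf_comm] at h; exact h
      have hdL' : Kk' ⊓ L' = ⊥ := by
        rcases line_le_or_disjoint (S := Kk') hL1' with h | h
        · exact absurd h hLK'
        · rw [inf_comm] at h; exact h
      obtain ⟨C, hdC, hsC⟩ := exists_compl_between hRK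
      obtain ⟨C', hdC', hsC'⟩ := exists_compl_between hRK'
      have frC : finrank K C = finrank K C' := by
        have t1 := finrank_compl_between hdC hsC
        have t2 := finrank_compl_between hdC' hsC'
        omega
      obtain ⟨eK₀, pK₀R, -⟩ := glueSub hdC hdC'
        (LinearEquiv.ofFinrankEq _ _ hrr) (LinearEquiv.ofFinrankEq _ _ frC)
      obtain ⟨eK, peK⟩ := cast_equiv hsC hsC' eK₀
      obtain ⟨e₃, p₃K, p₃L⟩ := glueSub hdL hdL' eK (LinearEquiv.ofFinrankEq _ _ hLL')
      obtain ⟨U, hdU, hsU⟩ := exists_compl_between (le_top : Kk ⊔ L ≤ ⊤)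
      obtain ⟨U', hdU', hsU'⟩ := exists_compl_between (le_top : Kk' ⊔ L' ≤ ⊤)
      have frX : finrank K ↥(Kk ⊔ L) = finrank K ↥(Kk' ⊔ L') := by
        have t1 := finrank_compl_between hdL rfl
        have t2 := finrank_compl_between hdL' rfl
        omega
      have frU : finrank K U = finrank K U' := by
        have t1 := finrank_compl_between hdU hsU
        have t2 := finrank_compl_between hdU' hsU'
        rw [finrank_top] at t1 t2
        omega
      obtain ⟨eT₀, pT₀X, -⟩ := glueSub hdU hdU' e₃ (LinearEquiv.ofFinrankEq _ _ frU)
      obtain ⟨f, pf⟩ := equiv_of_top hsU hsU' eT₀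
      have pX : ∀ x (hx : x ∈ Kk ⊔ L), f x = ↑(e₃ ⟨x, hx⟩) := by
        intro x hx
        rw [pf x (Submodule.mem_sup_left hx)]
        exact pT₀X x hx
      have pK : ∀ x (hx : x ∈ Kk), f x = ↑(eK ⟨x, hx⟩) := by
        intro x hx
        rw [pX x (Submodule.mem_sup_left hx)]
        exact p₃K x hx
      have pR : ∀ x (hx : x ∈ R), f x ∈ R' := by
        intro x hx
        rw [pK x (hRK hx), peK x (Submodule.mem_sup_left hx) (hRK hx), pK₀R x hx]
        exact Submodule.coe_mem _
      have pL : ∀ x (hx : x ∈ L), f x ∈ L' := by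
        intro x hx
        rw [pX x (Submodule.mem_sup_right hx), p₃L x hx]
        exact Submodule.coe_mem _
      exact ⟨f, map_eq_of f pR hrr,
        map_eq_of f (fun x hx => by rw [pK x hx]; exact Submodule.coe_mem _) hkk,
        map_eq_of f pL hLL'⟩

lemma exists_g [FiniteDimensional K V] [FiniteDimensional K V']
    [FiniteDimensional K W] [FiniteDimensional K W']
    (A : W →ₗ[K] V) (A' : W' →ₗ[K] V') (B : V →ₗ[K] W) (B' : V' →ₗ[K] W')
    (f : V ≃ₗ[K] V')
    (hBA : LinearMap.range B ≤ LinearMap.ker A)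
    (hBA' : LinearMap.range B' ≤ LinearMap.ker A')
    (hfA : Submodule.map (f : V →ₗ[K] V') (LinearMap.range A) = LinearMap.range A')
    (hfB : Submodule.map (f : V →ₗ[K] V') (LinearMap.ker B) = LinearMap.ker B')
    (hWW : finrank K W = finrank K W') :
    ∃ g : W ≃ₗ[K] W', A' ∘ₗ (g : W →ₗ[K] W') = (f : V →ₗ[K] V') ∘ₗ A ∧
      (g : W →ₗ[K] W') ∘ₗ B = B' ∘ₗ (f : V →ₗ[K] V') := by
  -- finrank bookkeeping
  have frRA : finrank K (LinearMap.range A) = finrank K (LinearMap.range A') := by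
    rw [← hfA, LinearEquiv.finrank_map_eq]
  have frKA : finrank K (LinearMap.ker A) = finrank K (LinearMap.ker A') := by
    have t1 := A.finrank_range_add_finrank_ker
    have t2 := A'.finrank_range_add_finrank_ker
    omega
  have frV : finrank K V = finrank K V' := f.finrank_eq
  have frKB : finrank K (LinearMap.ker B) = finrank K (LinearMap.ker B') := by
    rw [← hfB, LinearEquiv.finrank_map_eq]
  have frRB : finrank K (LinearMap.range B) = finrank K (LinearMap.range B') := by
    have t1 := B.finrank_range_add_finrank_ker
    have t2 := B'.finrank_range_add_finrank_ker
    omega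
  -- γ : range B ≃ range B'
  let qe : (V ⧸ LinearMap.ker B) ≃ₗ[K] V' ⧸ LinearMap.ker B' :=
    Submodule.Quotient.equiv (LinearMap.ker B) (LinearMap.ker B') f hfB
  let γ : LinearMap.range B ≃ₗ[K] LinearMap.range B' :=
    B.quotKerEquivRange.symm ≪≫ₗ qe ≪≫ₗ B'.quotKerEquivRange
  have pγ : ∀ x : V, (γ ⟨B x, LinearMap.mem_range_self B x⟩ : W') = B' (f x) := by
    intro x
    have h1 := B.quotKerEquivRange_symm_apply_image x (LinearMap.mem_range_self B x)
    rw [Submodule.mkQ_apply] at h1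
    have h2 : qe (Submodule.Quotient.mk x) = Submodule.Quotient.mk (f x) := rfl
    simp only [γ, LinearEquiv.trans_apply, h1, h2]
    rw [B'.quotKerEquivRange_apply_mk]
  -- complements of the kernels
  obtain ⟨Wc, hc⟩ := Submodule.exists_isCompl (LinearMap.ker A)
  obtain ⟨Wc', hc'⟩ := Submodule.exists_isCompl (LinearMap.ker A')
  -- α : Wc ≃ Wc'
  let fr : LinearMap.range A ≃ₗ[K] LinearMap.range A' :=
    f.ofSubmodules _ _ hfA
  let α : Wc ≃ₗ[K] Wc' :=
    (Submodule.quotientEquivOfIsCompl _ _ hc).symm ≪≫ₗ A.quotKerEquivRange ≪≫ₗ fr ≪≫ₗ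
      A'.quotKerEquivRange.symm ≪≫ₗ Submodule.quotientEquivOfIsCompl _ _ hc'
  have pα : ∀ w : Wc, A' ↑(α w) = f (A ↑w) := by
    intro w
    have h1 : (Submodule.quotientEquivOfIsCompl _ _ hc).symm w = Submodule.Quotient.mk (w : W) :=
      Submodule.quotientEquivOfIsCompl_symm_apply _ _ hc w
    have h2 : (Submodule.Quotient.mk ((α w : W')) : W' ⧸ LinearMap.ker A')
        = A'.quotKerEquivRange.symm (fr (A.quotKerEquivRange (Submodule.Quotient.mk (w : W)))) := by
      have h3 : (Submodule.quotientEquivOfIsCompl _ _ hc').symm (α w)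
          = Submodule.Quotient.mk ((α w : W')) :=
        Submodule.quotientEquivOfIsCompl_symm_apply _ _ hc' (α w)
      rw [← h3]
      simp only [α, LinearEquiv.trans_apply, h1, LinearEquiv.symm_apply_apply]
    have h4 := congrArg A'.quotKerEquivRange h2
    rw [LinearEquiv.apply_symm_apply] at h4
    have h5 := congrArg (Subtype.val) h4
    rw [A'.quotKerEquivRange_apply_mk] at h5
    rw [h5]
    show ((fr (A.quotKerEquivRange (Submodule.Quotient.mk (w : W)))) : V') = _
    have h6 : ∀ z : LinearMap.range A, ((fr z) : V') = f ↑z := fun z => rfl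
    rw [h6, A.quotKerEquivRange_apply_mk]
  -- D : complement of range B inside ker A
  obtain ⟨D, hdD, hsD⟩ := exists_compl_between hBA
  obtain ⟨D', hdD', hsD'⟩ := exists_compl_between hBA'
  have frD : finrank K D = finrank K D' := by
    have t1 := finrank_compl_between hdD hsD
    have t2 := finrank_compl_between hdD' hsD'
    omega
  obtain ⟨e₀, p₀B, -⟩ := glueSub hdD hdD' γ (LinearEquiv.ofFinrankEq _ _ frD)
  obtain ⟨eK, peK⟩ := cast_equiv hsD hsD' e₀
  have hdW : LinearMap.ker A ⊓ Wc = ⊥ := hc.disjoint.eq_bot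
  have hdW' : LinearMap.ker A' ⊓ Wc' = ⊥ := hc'.disjoint.eq_bot
  obtain ⟨eT₀, pT₀K, pT₀W⟩ := glueSub hdW hdW' eK α
  obtain ⟨g, pg⟩ := equiv_of_top hc.sup_eq_top hc'.sup_eq_top eT₀
  have pker : ∀ x (hx : x ∈ LinearMap.ker A), g x = ↑(eK ⟨x, hx⟩) := by
    intro x hx
    rw [pg x (Submodule.mem_sup_left hx)]
    exact pT₀K x hx
  have pWc : ∀ x (hx : x ∈ Wc), g x = ↑(α ⟨x, hx⟩) := by
    intro x hx
    rw [pg x (Submodule.mem_sup_right hx)]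
    exact pT₀W x hx
  refine ⟨g, ?_, ?_⟩
  · apply LinearMap.ext
    intro x
    have hx : x ∈ LinearMap.ker A ⊔ Wc := hc.sup_eq_top ▸ Submodule.mem_top
    obtain ⟨y, hy, z, hz, rfl⟩ := Submodule.mem_sup.1 hx
    simp only [LinearMap.comp_apply, LinearEquiv.coe_coe, map_add]
    have hgy : A' (g y) = 0 := by
      rw [pker y hy]
      exact (eK ⟨y, hy⟩).2
    have hAy : A y = 0 := hy
    rw [hgy, hAy, pWc z hz, pα ⟨z, hz⟩, map_zero, zero_add]
  · apply LinearMap.ext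
    intro x
    simp only [LinearMap.comp_apply, LinearEquiv.coe_coe]
    have hm : B x ∈ LinearMap.range B := LinearMap.mem_range_self B x
    rw [pker (B x) (hBA hm), peK (B x) (Submodule.mem_sup_left hm) (hBA hm), p₀B (B x) hm,
      pγ x]

end Helpers

open Submodule Module
/-- Turn a linear automorphism of `Fin n → ℂ` into a unit of the matrix ring. -/
noncomputable def toUnit {n : ℕ} (e : (Fin n → ℂ) ≃ₗ[ℂ] (Fin n → ℂ)) :
    (Matrix (Fin n) (Fin n) ℂ)ˣ where
  val := LinearMap.toMatrix' (e : (Fin n → ℂ) →ₗ[ℂ] (Fin n → ℂ))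
  inv := LinearMap.toMatrix' (e.symm : (Fin n → ℂ) →ₗ[ℂ] (Fin n → ℂ))
  val_inv := by
    rw [← LinearMap.toMatrix'_comp]
    have : (e : (Fin n → ℂ) →ₗ[ℂ] (Fin n → ℂ)) ∘ₗ (e.symm : (Fin n → ℂ) →ₗ[ℂ] (Fin n → ℂ))
        = LinearMap.id := by ext x; simp
    rw [this, LinearMap.toMatrix'_id]
  inv_val := by
    rw [← LinearMap.toMatrix'_comp]
    have : (e.symm : (Fin n → ℂ) →ₗ[ℂ] (Fin n → ℂ)) ∘ₗ (e : (Fin n → ℂ) →ₗ[ℂ] (Fin n → ℂ))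
        = LinearMap.id := by ext x; simp
    rw [this, LinearMap.toMatrix'_id]

/-- Two triples `(L, a, b)` and `(L', a', b')`, where `ab = ba = 0`,
`a'b' = b'a' = 0` and `L, L' ⊆ ℂ^p` are lines, are conjugate under
`GL_p(ℂ) × GL_q(ℂ)` iff `rank a = rank a'`, `rank b = rank b'`,
(`L ⊆ Im a` iff `L' ⊆ Im a'`), and (`L ⊆ ker b` iff `L' ⊆ ker b'`). -/
theorem stmt16 (p q : ℕ) (hp : 1 ≤ p) (hq : 1 ≤ q)
    (a a' : Matrix (Fin p) (Fin q) ℂ) (b b' : Matrix (Fin q) (Fin p) ℂ)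
    (hab : a * b = 0) (hba : b * a = 0)
    (hab' : a' * b' = 0) (hba' : b' * a' = 0)
    (L L' : Submodule ℂ (Fin p → ℂ))
    (hL : Module.finrank ℂ L = 1) (hL' : Module.finrank ℂ L' = 1) :
    (∃ (g₁ : (Matrix (Fin p) (Fin p) ℂ)ˣ) (g₂ : (Matrix (Fin q) (Fin q) ℂ)ˣ),
        a' = (g₁ : Matrix (Fin p) (Fin p) ℂ) * a * ((g₂⁻¹ : _) : Matrix (Fin q) (Fin q) ℂ) ∧
        b' = (g₂ : Matrix (Fin q) (Fin q) ℂ) * b * ((g₁⁻¹ : _) : Matrix (Fin p) (Fin p) ℂ) ∧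
        Submodule.map (Matrix.mulVecLin (g₁ : Matrix (Fin p) (Fin p) ℂ)) L = L') ↔
      (a.rank = a'.rank ∧ b.rank = b'.rank ∧
        (L ≤ LinearMap.range a.mulVecLin ↔ L' ≤ LinearMap.range a'.mulVecLin) ∧
        (L ≤ LinearMap.ker b.mulVecLin ↔ L' ≤ LinearMap.ker b'.mulVecLin)) := by
  set A := a.mulVecLin with hA
  set B := b.mulVecLin with hB
  set A' := a'.mulVecLin with hA'
  set B' := b'.mulVecLin with hB'
  have hRK : LinearMap.range A ≤ LinearMap.ker B := by
    intro x hx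
    obtain ⟨y, rfl⟩ := hx
    show B (A y) = 0
    have : B ∘ₗ A = (b * a).mulVecLin := (Matrix.mulVecLin_mul b a).symm
    have h0 : B (A y) = (b * a).mulVecLin y := by rw [← this]; rfl
    rw [h0, hba, Matrix.mulVecLin_zero]; rfl
  have hRK' : LinearMap.range A' ≤ LinearMap.ker B' := by
    intro x hx
    obtain ⟨y, rfl⟩ := hx
    show B' (A' y) = 0
    have : B' ∘ₗ A' = (b' * a').mulVecLin := (Matrix.mulVecLin_mul b' a').symm
    have h0 : B' (A' y) = (b' * a').mulVecLin y := by rw [← this]; rfl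
    rw [h0, hba', Matrix.mulVecLin_zero]; rfl
  have hBA : LinearMap.range B ≤ LinearMap.ker A := by
    intro x hx
    obtain ⟨y, rfl⟩ := hx
    show A (B y) = 0
    have : A ∘ₗ B = (a * b).mulVecLin := (Matrix.mulVecLin_mul a b).symm
    have h0 : A (B y) = (a * b).mulVecLin y := by rw [← this]; rfl
    rw [h0, hab, Matrix.mulVecLin_zero]; rfl
  have hBA' : LinearMap.range B' ≤ LinearMap.ker A' := by
    intro x hx
    obtain ⟨y, rfl⟩ := hx
    show A' (B' y) = 0
    have : A' ∘ₗ B' = (a' * b').mulVecLin := (Matrix.mulVecLin_mul a' b').symm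
    have h0 : A' (B' y) = (a' * b').mulVecLin y := by rw [← this]; rfl
    rw [h0, hab', Matrix.mulVecLin_zero]; rfl
  constructor
  · rintro ⟨g₁, g₂, ha', hb', hmap⟩
    -- linear equivalences from the units
    let e₁ : (Fin p → ℂ) ≃ₗ[ℂ] (Fin p → ℂ) :=
      LinearEquiv.ofLinear (mulVecLin (g₁ : Matrix (Fin p) (Fin p) ℂ))
        (mulVecLin ((g₁⁻¹ : _) : Matrix (Fin p) (Fin p) ℂ))
        (by rw [← Matrix.mulVecLin_mul, Units.mul_inv, Matrix.mulVecLin_one])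
        (by rw [← Matrix.mulVecLin_mul, Units.inv_mul, Matrix.mulVecLin_one])
    let e₂ : (Fin q → ℂ) ≃ₗ[ℂ] (Fin q → ℂ) :=
      LinearEquiv.ofLinear (mulVecLin (g₂ : Matrix (Fin q) (Fin q) ℂ))
        (mulVecLin ((g₂⁻¹ : _) : Matrix (Fin q) (Fin q) ℂ))
        (by rw [← Matrix.mulVecLin_mul, Units.mul_inv, Matrix.mulVecLin_one])
        (by rw [← Matrix.mulVecLin_mul, Units.inv_mul, Matrix.mulVecLin_one])
    have hA'eq : A' = (e₁ : (Fin p → ℂ) →ₗ[ℂ] (Fin p → ℂ)) ∘ₗ A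
        ∘ₗ (e₂.symm : (Fin q → ℂ) →ₗ[ℂ] (Fin q → ℂ)) := by
      rw [hA', ha', Matrix.mulVecLin_mul, Matrix.mulVecLin_mul]
      rfl
    have hB'eq : B' = (e₂ : (Fin q → ℂ) →ₗ[ℂ] (Fin q → ℂ)) ∘ₗ B
        ∘ₗ (e₁.symm : (Fin p → ℂ) →ₗ[ℂ] (Fin p → ℂ)) := by
      rw [hB', hb', Matrix.mulVecLin_mul, Matrix.mulVecLin_mul]
      rfl
    have hrange : LinearMap.range A' = Submodule.map (e₁ : (Fin p → ℂ) →ₗ[ℂ] (Fin p → ℂ))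
        (LinearMap.range A) := by
      rw [hA'eq, LinearMap.range_comp, LinearMap.range_comp, LinearEquiv.range,
        Submodule.map_top]
    have hker : LinearMap.ker B' = Submodule.map (e₁ : (Fin p → ℂ) →ₗ[ℂ] (Fin p → ℂ))
        (LinearMap.ker B) := by
      rw [hB'eq, LinearMap.ker_comp, LinearEquiv.ker, Submodule.comap_bot,
        LinearMap.ker_comp, ← Submodule.map_equiv_eq_comap_symm]
    have hmap' : Submodule.map (e₁ : (Fin p → ℂ) →ₗ[ℂ] (Fin p → ℂ)) L = L' := hmap
    refine ⟨?_, ?_, ?_, ?_⟩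
    · show finrank ℂ (LinearMap.range A) = finrank ℂ (LinearMap.range A')
      rw [hrange, LinearEquiv.finrank_map_eq]
    · show finrank ℂ (LinearMap.range B) = finrank ℂ (LinearMap.range B')
      have hrangeB : LinearMap.range B' = Submodule.map (e₂ : (Fin q → ℂ) →ₗ[ℂ] (Fin q → ℂ))
          (LinearMap.range B) := by
        rw [hB'eq, LinearMap.range_comp, LinearMap.range_comp, LinearEquiv.range,
          Submodule.map_top]
      rw [hrangeB, LinearEquiv.finrank_map_eq]
    · rw [← hmap', hrange]
      exact (Submodule.map_le_map_iff_of_injective e₁.injective L (LinearMap.range A)).symm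
    · rw [← hmap', hker]
      exact (Submodule.map_le_map_iff_of_injective e₁.injective L (LinearMap.ker B)).symm
  · rintro ⟨hra, hrb, hiff1, hiff2⟩
    have hrr : finrank ℂ (LinearMap.range A) = finrank ℂ (LinearMap.range A') := hra
    have hkk : finrank ℂ (LinearMap.ker B) = finrank ℂ (LinearMap.ker B') := by
      have t1 := B.finrank_range_add_finrank_ker
      have t2 := B'.finrank_range_add_finrank_ker
      have hrb' : finrank ℂ (LinearMap.range B) = finrank ℂ (LinearMap.range B') := hrb
      omega
    obtain ⟨f, hfA, hfB, hfL⟩ := exists_adapted (K := ℂ) rfl hRK hRK' hrr hkk hL hL' hiff1 hiff2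
    obtain ⟨g, hg1, hg2⟩ := exists_g A A' B B' f hBA hBA' hfA hfB rfl
    refine ⟨toUnit f, toUnit g, ?_, ?_, ?_⟩
    · have hAcomp : A' = ((f : (Fin p → ℂ) →ₗ[ℂ] (Fin p → ℂ)) ∘ₗ A)
          ∘ₗ (g.symm : (Fin q → ℂ) →ₗ[ℂ] (Fin q → ℂ)) := by
        apply LinearMap.ext
        intro x
        have := LinearMap.congr_fun hg1 (g.symm x)
        simpa using this
      show a' = LinearMap.toMatrix' (f : (Fin p → ℂ) →ₗ[ℂ] (Fin p → ℂ)) * a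
        * LinearMap.toMatrix' (g.symm : (Fin q → ℂ) →ₗ[ℂ] (Fin q → ℂ))
      have ha2 : a = LinearMap.toMatrix' A := by
        rw [hA, ← Matrix.toLin'_apply' a, LinearMap.toMatrix'_toLin']
      have ha2' : a' = LinearMap.toMatrix' A' := by
        rw [hA', ← Matrix.toLin'_apply' a', LinearMap.toMatrix'_toLin']
      rw [ha2, ha2', ← LinearMap.toMatrix'_comp, ← LinearMap.toMatrix'_comp, ← hAcomp]
    · have hBcomp : B' = ((g : (Fin q → ℂ) →ₗ[ℂ] (Fin q → ℂ)) ∘ₗ B)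
          ∘ₗ (f.symm : (Fin p → ℂ) →ₗ[ℂ] (Fin p → ℂ)) := by
        apply LinearMap.ext
        intro x
        have := LinearMap.congr_fun hg2 (f.symm x)
        simpa using this.symm
      show b' = LinearMap.toMatrix' (g : (Fin q → ℂ) →ₗ[ℂ] (Fin q → ℂ)) * b
        * LinearMap.toMatrix' (f.symm : (Fin p → ℂ) →ₗ[ℂ] (Fin p → ℂ))
      have hb2 : b = LinearMap.toMatrix' B := by
        rw [hB, ← Matrix.toLin'_apply' b, LinearMap.toMatrix'_toLin']
      have hb2' : b' = LinearMap.toMatrix' B' := by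
        rw [hB', ← Matrix.toLin'_apply' b', LinearMap.toMatrix'_toLin']
      rw [hb2, hb2', ← LinearMap.toMatrix'_comp, ← LinearMap.toMatrix'_comp, ← hBcomp]
    · show Submodule.map
        (mulVecLin (LinearMap.toMatrix' (f : (Fin p → ℂ) →ₗ[ℂ] (Fin p → ℂ)))) L = L'
      have : mulVecLin (LinearMap.toMatrix' (f : (Fin p → ℂ) →ₗ[ℂ] (Fin p → ℂ)))
          = (f : (Fin p → ℂ) →ₗ[ℂ] (Fin p → ℂ)) := by
        rw [← Matrix.toLin'_apply', Matrix.toLin'_toMatrix']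
      rw [this]
      exact hfL
end
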